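/- arXiv:1804.00300 — 5 statements merged into one kernel-verified Lean document; each statement's English description precedes it below -/
import Mathlib

section
/- If f₀ = 0, g₀ = 0 and π ≠ 0, then every bounded, twice continuously differentiable function u : ℝ → ℂ satisfying −u''(x) + ⟨g, u⟩ f(x) + ⟨f, u⟩ g(x) = 0 for all x ∈ ℝ is a constant function. -/
open MeasureTheory Complex Filter

/-- First antiderivative `h⁽⁻¹⁾(x) = ∫_{-∞}^x h(s) ds`. -/
noncomputable def pd1 (h : ℝ → ℂ) (x : ℝ) : ℂ := ∫ s in Set.Iic x, h s

/-- The `L²(ℝ)` inner product `⟨u, v⟩ = ∫ conj(u) v`, conjugate-linear in the first slot. -/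
noncomputable def ip (u v : ℝ → ℂ) : ℂ := ∫ x : ℝ, (starRingEnd ℂ) (u x) * v x

/-- The `L²(ℝ)` norm. -/
noncomputable def l2norm (u : ℝ → ℂ) : ℝ := Real.sqrt (∫ x : ℝ, ‖u x‖ ^ 2)

theorem integrable_conj' {h : ℝ → ℂ} (hi : Integrable h) :
    Integrable (fun x => (starRingEnd ℂ) (h x)) := by
  refine ⟨Complex.continuous_conj.comp_aestronglyMeasurable hi.1, ?_⟩
  simpa [HasFiniteIntegral] using hi.2

theorem ibp (h u : ℝ → ℂ) (hi : Integrable h) (R : ℝ)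
    (h0 : ∀ x, R ≤ |x| → h x = 0) (hsum : (∫ y, h y) = 0)
    (hud : Differentiable ℝ u) (hdc : Continuous (deriv u)) (hdi : Integrable (deriv u))
    (M : ℝ) (hM : ∀ x, ‖u x‖ ≤ M) (hd0 : ∀ t, R ≤ t → deriv u t = 0) :
    (∫ x, (starRingEnd ℂ) (h x) * u x) = -∫ t, (starRingEnd ℂ) (pd1 h t) * deriv u t := by
  set H : ℝ → ℝ → ℂ :=
    fun x t => (starRingEnd ℂ) (h x) * Set.indicator (Set.Ioc x R) (deriv u) t with hH
  have hInt : Integrable (Function.uncurry H) ((volume : Measure ℝ).prod volume) := by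
    have hp : Integrable (fun z : ℝ × ℝ => (starRingEnd ℂ) (h z.1) * deriv u z.2)
        ((volume : Measure ℝ).prod volume) := (integrable_conj' hi).mul_prod hdi
    have hSm : MeasurableSet {z : ℝ × ℝ | z.1 < z.2 ∧ z.2 ≤ R} :=
      (measurableSet_lt measurable_fst measurable_snd).inter
        (measurable_snd measurableSet_Iic)
    have he : Function.uncurry H = Set.indicator {z : ℝ × ℝ | z.1 < z.2 ∧ z.2 ≤ R}
        (fun z => (starRingEnd ℂ) (h z.1) * deriv u z.2) := by
      funext z
      by_cases hz : z.1 < z.2 ∧ z.2 ≤ R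
      · simp only [Function.uncurry, hH, Set.indicator_apply, Set.mem_Ioc, Set.mem_setOf_eq,
          if_pos hz]
      · simp only [Function.uncurry, hH, Set.indicator_apply, Set.mem_Ioc, Set.mem_setOf_eq,
          if_neg hz, mul_zero]
    rw [he]
    exact hp.indicator hSm
  have hswap := integral_integral_swap hInt
  have hL : ∀ x, (∫ t, H x t) = (starRingEnd ℂ) (h x) * (u R - u x) := by
    intro x
    have e1 : (∫ t, H x t) = (starRingEnd ℂ) (h x) * ∫ t in Set.Ioc x R, deriv u t := by
      rw [integral_const_mul, integral_indicator measurableSet_Ioc]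
    rw [e1]
    by_cases hx : x ≤ R
    · congr 1
      rw [← intervalIntegral.integral_of_le hx]
      exact intervalIntegral.integral_deriv_eq_sub (fun y _ => hud y)
        (hdc.intervalIntegrable x R)
    · rw [h0 x (le_trans (not_le.mp hx).le (le_abs_self x))]
      simp
  have hR : ∀ t, (∫ x, H x t) = (starRingEnd ℂ) (pd1 h t) * deriv u t := by
    intro t
    by_cases ht : t ≤ R
    · have e : (fun x => H x t) =
          Set.indicator (Set.Iio t) (fun x => (starRingEnd ℂ) (h x) * deriv u t) := by
        funext x
        by_cases hx : x < t
        · simp only [hH, Set.indicator_apply, Set.mem_Ioc, Set.mem_Iio, if_pos hx]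
          rw [if_pos (show x < t ∧ t ≤ R from ⟨hx, ht⟩)]
        · have : ¬(x < t ∧ t ≤ R) := fun c => hx c.1
          simp only [hH, Set.indicator_apply, Set.mem_Ioc, Set.mem_Iio, if_neg hx,
            if_neg this, mul_zero]
      rw [e, integral_indicator measurableSet_Iio, ← integral_Iic_eq_integral_Iio,
        integral_mul_const, integral_conj]
      rfl
    · have hdt : deriv u t = 0 := hd0 t (not_le.mp ht).le
      have e : (fun x => H x t) = fun _ => (0 : ℂ) := by
        funext x
        have : ¬(x < t ∧ t ≤ R) := fun c => ht c.2
        simp only [hH, Set.indicator_apply, Set.mem_Ioc, if_neg this, mul_zero]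
      rw [e, hdt, mul_zero, integral_zero]
  have hhu : Integrable (fun x => (starRingEnd ℂ) (h x) * u x) := by
    have := (integrable_conj' hi).bdd_mul hud.continuous.aestronglyMeasurable (Filter.Eventually.of_forall hM)
    simpa [mul_comm] using this
  have hLout : (∫ x, (starRingEnd ℂ) (h x) * (u R - u x))
      = -∫ x, (starRingEnd ℂ) (h x) * u x := by
    have e : (fun x => (starRingEnd ℂ) (h x) * (u R - u x))
        = fun x => (starRingEnd ℂ) (h x) * u R - (starRingEnd ℂ) (h x) * u x := by
      funext x; ring
    rw [e, integral_sub ((integrable_conj' hi).mul_const (u R)) hhu,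
      integral_mul_const, integral_conj, hsum]
    simp
  calc (∫ x, (starRingEnd ℂ) (h x) * u x)
      = -∫ x, (starRingEnd ℂ) (h x) * (u R - u x) := by rw [hLout]; ring
    _ = -∫ x, ∫ t, H x t := by rw [funext hL]
    _ = -∫ t, ∫ x, H x t := by rw [hswap]
    _ = -∫ t, (starRingEnd ℂ) (pd1 h t) * deriv u t := by rw [funext hR]

theorem pd1_sub (h : ℝ → ℂ) (hi : Integrable h) (a b : ℝ) :
    pd1 h b - pd1 h a = ∫ x in a..b, h x :=
  intervalIntegral.integral_Iic_sub_Iic hi.integrableOn hi.integrableOn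

theorem pd1_cont (h : ℝ → ℂ) (hi : Integrable h) : Continuous (pd1 h) := by
  have e : pd1 h = fun b => pd1 h 0 + ∫ x in (0:ℝ)..b, h x := by
    funext b; rw [← pd1_sub h hi]; ring
  rw [e]
  exact continuous_const.add
    (intervalIntegral.continuous_primitive (fun a b => hi.intervalIntegrable) 0)

theorem pd1_left (h : ℝ → ℂ) (R : ℝ) (h0 : ∀ x, R ≤ |x| → h x = 0) (b : ℝ) (hb : b ≤ -R) :
    pd1 h b = 0 := by
  unfold pd1
  rw [setIntegral_congr_fun measurableSet_Iic
    (fun x hx => h0 x (le_trans (by simp only [Set.mem_Iic] at hx; linarith) (neg_le_abs x)))]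
  exact integral_zero _ _

theorem pd1_right (h : ℝ → ℂ) (hi : Integrable h) (R : ℝ) (h0 : ∀ x, R ≤ |x| → h x = 0)
    (hsum : (∫ y, h y) = 0) (b : ℝ) (hb : R ≤ b) : pd1 h b = 0 := by
  have h1 : (∫ x in Set.Ioi b, h x) = 0 := by
    rw [setIntegral_congr_fun measurableSet_Ioi
      (fun x hx => h0 x (le_trans (le_trans hb (le_of_lt hx)) (le_abs_self x)))]
    exact integral_zero _ _
  have h2 := intervalIntegral.integral_Iic_add_Ioi (f := h) (b := b) (μ := volume)
    hi.integrableOn hi.integrableOn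
  unfold pd1
  rw [hsum, h1] at h2
  simpa using h2

theorem only_constant_halfBoundStates_of_pi_ne_zero
    (f g : ℝ → ℂ)
    (hfi : Integrable f) (hgi : Integrable g)
    (hf2 : MemLp f 2) (hg2 : MemLp g 2)
    (hfc : HasCompactSupport f) (hgc : HasCompactSupport g)
    (hf0 : (∫ y : ℝ, f y) = 0) (hg0 : (∫ y : ℝ, g y) = 0)
    (hpi : l2norm (pd1 f) * l2norm (pd1 g)
        - ‖ip (pd1 f) (pd1 g) + 1‖ ≠ 0) :
    ∀ u : ℝ → ℂ,
      (∃ M : ℝ, ∀ x : ℝ, ‖u x‖ ≤ M) →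
      ContDiff ℝ 2 u →
      (∀ x : ℝ, -(deriv (deriv u) x) + ip g u * f x + ip f u * g x = 0) →
      ∃ c : ℂ, ∀ x : ℝ, u x = c := by
  intro u hMex hu hequ
  obtain ⟨M, hM⟩ := hMex
  have hM0 : 0 ≤ M := le_trans (norm_nonneg _) (hM 0)
  -- smoothness facts
  have h2 : ContDiff ℝ (1 + 1) u := by norm_num; exact hu
  have hu1 : ContDiff ℝ 1 (deriv u) := (contDiff_succ_iff_deriv.mp h2).2.2
  have hud : Differentiable ℝ u := hu.differentiable (by norm_num)
  have hud1 : Differentiable ℝ (deriv u) := hu1.differentiable (by norm_num)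
  have hdc : Continuous (deriv u) := hu1.continuous
  have hddc : Continuous (deriv (deriv u)) := hu1.continuous_deriv le_rfl
  set A := ip g u with hA
  set B := ip f u with hB
  have hdd : ∀ x, deriv (deriv u) x = A * f x + B * g x := by
    intro x
    have := hequ x
    linear_combination -this
  -- radius R outside which f, g vanish
  obtain ⟨rf, hrf⟩ := hfc.isCompact.isBounded.subset_closedBall 0
  obtain ⟨rg, hrg⟩ := hgc.isCompact.isBounded.subset_closedBall 0
  set R : ℝ := max rf rg + 1 with hRdef
  have hvanish : ∀ (h : ℝ → ℂ) (r : ℝ), tsupport h ⊆ Metric.closedBall 0 r → r ≤ max rf rg →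
      ∀ x, R ≤ |x| → h x = 0 := by
    intro h r hsub hr x hx
    by_contra hne
    have hmem : x ∈ tsupport h := subset_tsupport h hne
    have := hsub hmem
    rw [Metric.mem_closedBall, Real.dist_eq, sub_zero] at this
    have : |x| ≤ max rf rg := le_trans this hr
    rw [hRdef] at hx; linarith
  have hf0' : ∀ x, R ≤ |x| → f x = 0 := hvanish f rf hrf (le_max_left _ _)
  have hg0' : ∀ x, R ≤ |x| → g x = 0 := hvanish g rg hrg (le_max_right _ _)
  have hdd0 : ∀ x, R ≤ |x| → deriv (deriv u) x = 0 := by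
    intro x hx; rw [hdd, hf0' x hx, hg0' x hx]; ring
  -- FTC
  have ftc2 : ∀ a b : ℝ, (∫ y in a..b, deriv (deriv u) y) = deriv u b - deriv u a :=
    fun a b => intervalIntegral.integral_deriv_eq_sub (fun y _ => hud1 y)
      (hddc.intervalIntegrable a b)
  have ftc1 : ∀ a b : ℝ, (∫ y in a..b, deriv u y) = u b - u a :=
    fun a b => intervalIntegral.integral_deriv_eq_sub (fun y _ => hud y)
      (hdc.intervalIntegrable a b)
  -- deriv u is constant on the tails
  have hconstR : ∀ x, R ≤ x → deriv u x = deriv u R := by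
    intro x hx
    have h0 : (∫ y in R..x, deriv (deriv u) y) = 0 := by
      rw [intervalIntegral.integral_congr (g := fun _ => (0:ℂ))
        (fun y hy => by
          rw [Set.uIcc_of_le hx] at hy
          exact hdd0 y (le_trans hy.1 (le_abs_self y)))]
      simp
    have h1 := ftc2 R x
    rw [h0] at h1
    exact (eq_of_sub_eq_zero h1.symm)
  have hconstL : ∀ x, x ≤ -R → deriv u x = deriv u (-R) := by
    intro x hx
    have h0 : (∫ y in x..(-R), deriv (deriv u) y) = 0 := by
      rw [intervalIntegral.integral_congr (g := fun _ => (0:ℂ))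
        (fun y hy => by
          rw [Set.uIcc_of_le hx] at hy
          exact hdd0 y (le_trans (by linarith [hy.2]) (neg_le_abs y)))]
      simp
    have h1 := ftc2 x (-R)
    rw [h0] at h1
    exact (eq_of_sub_eq_zero h1.symm).symm
  -- tail values of deriv u are zero (else u unbounded)
  have hcR : deriv u R = 0 := by
    by_contra hc
    have hnc : 0 < ‖deriv u R‖ := norm_pos_iff.mpr hc
    set D : ℝ := M + ‖u R‖ + 1 with hD
    set x : ℝ := R + D / ‖deriv u R‖ with hx
    have hxR : R ≤ x := by
      rw [hx]
      have : 0 ≤ D / ‖deriv u R‖ := div_nonneg (by positivity) hnc.le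
      linarith
    have hint : (∫ y in R..x, deriv u y) = ((x - R : ℝ) : ℂ) * deriv u R := by
      rw [intervalIntegral.integral_congr (g := fun _ => deriv u R)
        (fun y hy => by rw [Set.uIcc_of_le hxR] at hy; exact hconstR y hy.1)]
      rw [intervalIntegral.integral_const]
      rw [Complex.real_smul]
    have hD0 : 0 < D := by rw [hD]; positivity
    have hux : u x = u R + ((x - R : ℝ) : ℂ) * deriv u R := by
      have := ftc1 R x
      rw [hint] at this
      linear_combination -this
    have hxsub : x - R = D / ‖deriv u R‖ := by rw [hx]; ring
    have hnorm : ‖((x - R : ℝ) : ℂ) * deriv u R‖ = D := by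
      rw [norm_mul, Complex.norm_real, Real.norm_eq_abs, hxsub,
        _root_.abs_of_nonneg (div_nonneg hD0.le hnc.le)]
      exact div_mul_cancel₀ D (ne_of_gt hnc)
    have hge : D - ‖u R‖ ≤ ‖u x‖ := by
      have h1 : ‖((x - R : ℝ) : ℂ) * deriv u R‖ ≤ ‖u x‖ + ‖u R‖ := by
        calc ‖((x - R : ℝ) : ℂ) * deriv u R‖ = ‖u x - u R‖ := by rw [hux]; congr 1; ring
          _ ≤ ‖u x‖ + ‖u R‖ := norm_sub_le _ _
      rw [hnorm] at h1; linarith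
    have := hM x
    rw [hD] at hge
    linarith
  have hcL : deriv u (-R) = 0 := by
    by_contra hc
    have hnc : 0 < ‖deriv u (-R)‖ := norm_pos_iff.mpr hc
    set D : ℝ := M + ‖u (-R)‖ + 1 with hD
    set x : ℝ := -R - D / ‖deriv u (-R)‖ with hx
    have hxR : x ≤ -R := by
      rw [hx]
      have : 0 ≤ D / ‖deriv u (-R)‖ := div_nonneg (by positivity) hnc.le
      linarith
    have hint : (∫ y in x..(-R), deriv u y) = ((-R - x : ℝ) : ℂ) * deriv u (-R) := by
      rw [intervalIntegral.integral_congr (g := fun _ => deriv u (-R))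
        (fun y hy => by rw [Set.uIcc_of_le hxR] at hy; exact hconstL y hy.2)]
      rw [intervalIntegral.integral_const]
      rw [Complex.real_smul]
    have hD0 : 0 < D := by rw [hD]; positivity
    have hux : u (-R) = u x + ((-R - x : ℝ) : ℂ) * deriv u (-R) := by
      have := ftc1 x (-R)
      rw [hint] at this
      linear_combination -this
    have hxsub : -R - x = D / ‖deriv u (-R)‖ := by rw [hx]; ring
    have hnorm : ‖((-R - x : ℝ) : ℂ) * deriv u (-R)‖ = D := by
      rw [norm_mul, Complex.norm_real, Real.norm_eq_abs, hxsub,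
        _root_.abs_of_nonneg (div_nonneg hD0.le hnc.le)]
      exact div_mul_cancel₀ D (ne_of_gt hnc)
    have hge : D - ‖u (-R)‖ ≤ ‖u x‖ := by
      have h1 : ‖((-R - x : ℝ) : ℂ) * deriv u (-R)‖ ≤ ‖u (-R)‖ + ‖u x‖ := by
        calc ‖((-R - x : ℝ) : ℂ) * deriv u (-R)‖ = ‖u (-R) - u x‖ := by rw [hux]; congr 1; ring
          _ ≤ ‖u (-R)‖ + ‖u x‖ := norm_sub_le _ _
      rw [hnorm] at h1; linarith
    have := hM x
    rw [hD] at hge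
    linarith
  -- representation of deriv u
  have hrep : ∀ x, deriv u x = A * pd1 f x + B * pd1 g x := by
    intro x
    have h1 := ftc2 (-R) x
    rw [hcL, sub_zero] at h1
    have h2 : (∫ y in (-R)..x, deriv (deriv u) y)
        = A * (pd1 f x - pd1 f (-R)) + B * (pd1 g x - pd1 g (-R)) := by
      rw [intervalIntegral.integral_congr (g := fun y => A * f y + B * g y)
        (fun y _ => hdd y)]
      rw [intervalIntegral.integral_add (hfi.intervalIntegrable.const_mul A)
        (hgi.intervalIntegrable.const_mul B),
        intervalIntegral.integral_const_mul, intervalIntegral.integral_const_mul,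
        pd1_sub f hfi, pd1_sub g hgi]
    rw [pd1_left f R hf0' (-R) le_rfl, pd1_left g R hg0' (-R) le_rfl] at h2
    rw [h2] at h1
    rw [← h1]; ring
  -- support and continuity of the antiderivatives
  have hF0 : ∀ x, R ≤ |x| → pd1 f x = 0 := by
    intro x hx
    rcases le_abs.mp hx with h | h
    · exact pd1_right f hfi R hf0' hf0 x h
    · exact pd1_left f R hf0' x (by linarith)
  have hG0 : ∀ x, R ≤ |x| → pd1 g x = 0 := by
    intro x hx
    rcases le_abs.mp hx with h | h
    · exact pd1_right g hgi R hg0' hg0 x h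
    · exact pd1_left g R hg0' x (by linarith)
  have habs : ∀ x : ℝ, x ∉ Set.Icc (-R) R → R ≤ |x| := by
    intro x hxm
    rw [Set.mem_Icc] at hxm
    push_neg at hxm
    rcases lt_or_ge x (-R) with hh | hh
    · exact le_trans (by linarith) (neg_le_abs x)
    · exact le_trans (hxm hh).le (le_abs_self x)
  have hFc : Continuous (pd1 f) := pd1_cont f hfi
  have hGc : Continuous (pd1 g) := pd1_cont g hgi
  have hFcs : HasCompactSupport (pd1 f) :=
    HasCompactSupport.intro isCompact_Icc (fun x hx => hF0 x (habs x hx))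
  have hGcs : HasCompactSupport (pd1 g) :=
    HasCompactSupport.intro isCompact_Icc (fun x hx => hG0 x (habs x hx))
  have hducs : HasCompactSupport (deriv u) :=
    HasCompactSupport.intro isCompact_Icc (fun x hx => by
      rw [hrep x, hF0 x (habs x hx), hG0 x (habs x hx)]; ring)
  have hdui : Integrable (deriv u) := hdc.integrable_of_hasCompactSupport hducs
  have hd0 : ∀ t, R ≤ t → deriv u t = 0 := fun t ht => by rw [hconstR t ht, hcR]
  -- the two linear equations
  have eA : A = -∫ t, (starRingEnd ℂ) (pd1 g t) * deriv u t :=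
    ibp g u hgi R hg0' hg0 hud hdc hdui M hM hd0
  have eB : B = -∫ t, (starRingEnd ℂ) (pd1 f t) * deriv u t :=
    ibp f u hfi R hf0' hf0 hud hdc hdui M hM hd0
  have hmul_int : ∀ (p q : ℝ → ℂ), Continuous p → Continuous q → HasCompactSupport q →
      Integrable (fun t => (starRingEnd ℂ) (p t) * q t) := by
    intro p q hp hq hqs
    exact ((Complex.continuous_conj.comp hp).mul hq).integrable_of_hasCompactSupport
      (hqs.mul_left)
  have expandG : (∫ t, (starRingEnd ℂ) (pd1 g t) * deriv u t)
      = A * ip (pd1 g) (pd1 f) + B * ip (pd1 g) (pd1 g) := by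
    have e : (fun t => (starRingEnd ℂ) (pd1 g t) * deriv u t)
        = fun t => A * ((starRingEnd ℂ) (pd1 g t) * pd1 f t)
            + B * ((starRingEnd ℂ) (pd1 g t) * pd1 g t) := by
      funext t; rw [hrep t]; ring
    rw [e, integral_add ((hmul_int _ _ hGc hFc hFcs).const_mul A)
      ((hmul_int _ _ hGc hGc hGcs).const_mul B), integral_const_mul, integral_const_mul]
    rfl
  have expandF : (∫ t, (starRingEnd ℂ) (pd1 f t) * deriv u t)
      = A * ip (pd1 f) (pd1 f) + B * ip (pd1 f) (pd1 g) := by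
    have e : (fun t => (starRingEnd ℂ) (pd1 f t) * deriv u t)
        = fun t => A * ((starRingEnd ℂ) (pd1 f t) * pd1 f t)
            + B * ((starRingEnd ℂ) (pd1 f t) * pd1 g t) := by
      funext t; rw [hrep t]; ring
    rw [e, integral_add ((hmul_int _ _ hFc hFc hFcs).const_mul A)
      ((hmul_int _ _ hFc hGc hGcs).const_mul B), integral_const_mul, integral_const_mul]
    rfl
  -- algebraic structure
  set q : ℂ := ip (pd1 f) (pd1 g) with hq
  have hqc : ip (pd1 g) (pd1 f) = (starRingEnd ℂ) q := by
    rw [hq]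
    unfold ip
    rw [← integral_conj]
    congr 1
    funext x
    simp [mul_comm]
  set NF : ℝ := ∫ x, ‖pd1 f x‖ ^ 2 with hNF
  set NG : ℝ := ∫ x, ‖pd1 g x‖ ^ 2 with hNG
  have hNF0 : 0 ≤ NF := integral_nonneg (fun x => sq_nonneg _)
  have hNG0 : 0 ≤ NG := integral_nonneg (fun x => sq_nonneg _)
  have ipFF : ip (pd1 f) (pd1 f) = (NF : ℂ) := by
    rw [hNF,
      show ((∫ x, ‖pd1 f x‖ ^ 2 : ℝ) : ℂ) = ∫ x, ((‖pd1 f x‖ ^ 2 : ℝ) : ℂ) from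
        integral_ofReal.symm]
    unfold ip
    congr 1
    funext x
    rw [← Complex.normSq_eq_conj_mul_self]
    norm_cast
    rw [← Complex.sq_norm]
  have ipGG : ip (pd1 g) (pd1 g) = (NG : ℂ) := by
    rw [hNG,
      show ((∫ x, ‖pd1 g x‖ ^ 2 : ℝ) : ℂ) = ∫ x, ((‖pd1 g x‖ ^ 2 : ℝ) : ℂ) from
        integral_ofReal.symm]
    unfold ip
    congr 1
    funext x
    rw [← Complex.normSq_eq_conj_mul_self]
    norm_cast
    rw [← Complex.sq_norm]
  have eqA : A + A * (starRingEnd ℂ) q + B * (NG : ℂ) = 0 := by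
    have h1 := eA
    rw [expandG, hqc, ipGG] at h1
    linear_combination h1
  have eqB : B + A * (NF : ℂ) + B * q = 0 := by
    have h1 := eB
    rw [expandF, ipFF] at h1
    linear_combination h1
  have hdet : ((1 : ℂ) + (starRingEnd ℂ) q) * (1 + q) - (NF : ℂ) * (NG : ℂ) ≠ 0 := by
    have e1 : (1 : ℂ) + (starRingEnd ℂ) q = (starRingEnd ℂ) (1 + q) := by
      rw [map_add, map_one]
    have key : ((1 : ℂ) + (starRingEnd ℂ) q) * (1 + q)
        = ((‖q + 1‖ ^ 2 : ℝ) : ℂ) := by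
      rw [e1, ← Complex.normSq_eq_conj_mul_self]
      norm_cast
      rw [← Complex.sq_norm]
      rw [add_comm]
    rw [key]
    intro hc
    apply hpi
    have hreal : ‖q + 1‖ ^ 2 - NF * NG = 0 := by
      have := hc
      rw [← Complex.ofReal_mul, ← Complex.ofReal_sub] at this
      exact_mod_cast this
    have hFsqrt : l2norm (pd1 f) = Real.sqrt NF := rfl
    have hGsqrt : l2norm (pd1 g) = Real.sqrt NG := rfl
    rw [hFsqrt, hGsqrt, ← Real.sqrt_mul hNF0]
    have : NF * NG = ‖q + 1‖ ^ 2 := by linarith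
    rw [this, Real.sqrt_sq (norm_nonneg _)]
    rw [hq]
    ring
  have hAz : A = 0 := by
    have h1 : A * (((1 : ℂ) + (starRingEnd ℂ) q) * (1 + q) - (NF : ℂ) * (NG : ℂ)) = 0 := by
      linear_combination (1 + q) * eqA - (NG : ℂ) * eqB
    exact (mul_eq_zero.mp h1).resolve_right hdet
  have hBz : B = 0 := by
    have h1 : B * (((1 : ℂ) + (starRingEnd ℂ) q) * (1 + q) - (NF : ℂ) * (NG : ℂ)) = 0 := by
      linear_combination (1 + (starRingEnd ℂ) q) * eqB - (NF : ℂ) * eqA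
    exact (mul_eq_zero.mp h1).resolve_right hdet
  refine ⟨u 0, fun x => ?_⟩
  have hz : ∀ y, deriv u y = 0 := fun y => by rw [hrep y, hAz, hBz]; ring
  have h1 := ftc1 0 x
  rw [intervalIntegral.integral_congr (g := fun _ => (0:ℂ)) (fun y _ => hz y)] at h1
  simp only [intervalIntegral.integral_zero] at h1
  exact eq_of_sub_eq_zero h1.symm
end

section
/- Let u : ℝ → ℂ be bounded, twice continuously differentiable, and satisfy −u''(x) + ⟨g, u⟩ f(x) + ⟨f, u⟩ g(x) = 0 for all x ∈ ℝ. Then ⟨g, u⟩ f₀ + ⟨f, u⟩ g₀ = 0, and there exists a constant c ∈ ℂ such that u(x) = ⟨g, u⟩ f⁽⁻²⁾(x) + ⟨f, u⟩ g⁽⁻²⁾(x) + c for all x ∈ ℝ. -/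
open MeasureTheory Complex Filter

/-- Second antiderivative `h⁽⁻²⁾(x) = ∫_{-∞}^x (x - s) h(s) ds`. -/
noncomputable def pd2 (h : ℝ → ℂ) (x : ℝ) : ℂ := ∫ s in Set.Iic x, ((x : ℂ) - (s : ℂ)) * h s

lemma mul_shift_integrable (φ : ℝ → ℂ) (hφ : Integrable φ) (r : ℝ)
    (hs : ∀ s : ℝ, φ s ≠ 0 → |s| ≤ r) (x : ℝ) :
    Integrable (fun s : ℝ => ((x : ℂ) - (s : ℂ)) * φ s) := by
  refine Integrable.mono' (hφ.norm.const_mul (|x| + r)) ?_ ?_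
  · exact ((continuous_const.sub Complex.continuous_ofReal).aestronglyMeasurable).mul
      hφ.aestronglyMeasurable
  · refine Eventually.of_forall fun s => ?_
    by_cases hz : φ s = 0
    · simp [hz]
    · have hsr : |s| ≤ r := hs s hz
      have hcast : ((x : ℂ) - (s : ℂ)) = ((x - s : ℝ) : ℂ) := by push_cast; ring
      rw [norm_mul, hcast, Complex.norm_real, Real.norm_eq_abs]
      have h1 : |x - s| ≤ |x| + r := (abs_sub _ _).trans (by linarith)
      exact mul_le_mul_of_nonneg_right h1 (norm_nonneg _)

theorem bounded_solution_structure
    (f g : ℝ → ℂ)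
    (hfi : Integrable f) (hgi : Integrable g)
    (hf2 : MemLp f 2) (hg2 : MemLp g 2)
    (hfc : HasCompactSupport f) (hgc : HasCompactSupport g)
    (u : ℝ → ℂ)
    (hub : ∃ M : ℝ, ∀ x : ℝ, ‖u x‖ ≤ M)
    (hu2 : ContDiff ℝ 2 u)
    (hueq : ∀ x : ℝ, -(deriv (deriv u) x) + ip g u * f x + ip f u * g x = 0) :
    ip g u * (∫ y : ℝ, f y) + ip f u * (∫ y : ℝ, g y) = 0 ∧
    ∃ c : ℂ, ∀ x : ℝ, u x = ip g u * pd2 f x + ip f u * pd2 g x + c := by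
  classical
  obtain ⟨M, hM⟩ := hub
  have hM0 : 0 ≤ M := le_trans (norm_nonneg _) (hM 0)
  set A := ip g u with hA
  set B := ip f u with hB
  set h : ℝ → ℂ := fun x => A * f x + B * g x with hh
  have hd2 : ∀ x, deriv (deriv u) x = h x := by
    intro x
    have := hueq x
    simp only [hh]
    linear_combination -this
  have hu1 : ContDiff ℝ 1 (deriv u) :=
    (contDiff_succ_iff_deriv.mp (show ContDiff ℝ (1+1) u by norm_num; exact hu2)).2.2
  have hudiff : Differentiable ℝ u := hu2.differentiable (by norm_num)
  have hu'diff : Differentiable ℝ (deriv u) := hu1.differentiable (by norm_num)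
  have hu'cont : Continuous (deriv u) := hu1.continuous
  have hcont : Continuous h := by
    have hc2 : Continuous (deriv (deriv u)) :=
      ((contDiff_succ_iff_deriv.mp
        (show ContDiff ℝ (0+1) (deriv u) by norm_num; exact hu1)).2.2).continuous
    exact hc2.congr hd2
  have hhi : Integrable h := (hfi.const_mul A).add (hgi.const_mul B)
  -- support bound
  obtain ⟨r, hK⟩ := ((hfc.union hgc).isBounded).subset_closedBall (0 : ℝ)
  have hfr : ∀ s : ℝ, f s ≠ 0 → |s| ≤ r := by
    intro s hs
    have : s ∈ Metric.closedBall (0:ℝ) r :=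
      hK (Set.mem_union_left _ (subset_tsupport f hs))
    simpa [Real.dist_eq] using this
  have hgr : ∀ s : ℝ, g s ≠ 0 → |s| ≤ r := by
    intro s hs
    have : s ∈ Metric.closedBall (0:ℝ) r :=
      hK (Set.mem_union_right _ (subset_tsupport g hs))
    simpa [Real.dist_eq] using this
  have hhz : ∀ s : ℝ, r < |s| → h s = 0 := by
    intro s hs
    have hf0 : f s = 0 := by
      by_contra hne; exact absurd (hfr s hne) (not_le.mpr hs)
    have hg0 : g s = 0 := by
      by_contra hne; exact absurd (hgr s hne) (not_le.mpr hs)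
    simp [hh, hf0, hg0]
  have hhr : ∀ s : ℝ, h s ≠ 0 → |s| ≤ r := fun s hs => by
    by_contra hc; exact hs (hhz s (not_le.mp hc))
  set a : ℝ := -(r+1) with ha
  set b : ℝ := r+1 with hb
  have ha0 : ∀ s : ℝ, s ≤ a → h s = 0 := fun s hs =>
    hhz s (lt_of_lt_of_le (by simp only [ha] at hs; linarith) (neg_le_abs s))
  have hb0 : ∀ s : ℝ, b ≤ s → h s = 0 := fun s hs =>
    hhz s (lt_of_lt_of_le (by simp only [hb] at hs; linarith) (le_abs_self s))
  -- FTC facts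
  have hFTC : ∀ x y : ℝ, deriv u y - deriv u x = ∫ s in x..y, h s := by
    intro x y
    refine (intervalIntegral.integral_eq_sub_of_hasDerivAt (fun t _ => ?_)
      hhi.intervalIntegrable).symm
    rw [← hd2 t]
    exact (hu'diff t).hasDerivAt
  have huFTC : ∀ x y : ℝ, u y - u x = ∫ s in x..y, deriv u s := fun x y =>
    (intervalIntegral.integral_eq_sub_of_hasDerivAt (fun t _ => (hudiff t).hasDerivAt)
      (hu'cont.intervalIntegrable _ _)).symm
  have hconstplus : ∀ x : ℝ, b ≤ x → deriv u x = deriv u b := by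
    intro x hx
    have hz : ∫ s in b..x, h s = 0 := by
      rw [intervalIntegral.integral_congr (g := fun _ => (0:ℂ)) ?_,
        intervalIntegral.integral_zero]
      intro t ht
      rw [Set.uIcc_of_le hx] at ht
      exact hb0 t ht.1
    exact sub_eq_zero.mp ((hFTC b x).trans hz)
  have hconstminus : ∀ x : ℝ, x ≤ a → deriv u x = deriv u a := by
    intro x hx
    have hz : ∫ s in x..a, h s = 0 := by
      rw [intervalIntegral.integral_congr (g := fun _ => (0:ℂ)) ?_,
        intervalIntegral.integral_zero]
      intro t ht
      rw [Set.uIcc_of_le hx] at ht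
      exact ha0 t ht.2
    exact (sub_eq_zero.mp ((hFTC x a).trans hz)).symm
  -- boundedness forces the derivative to vanish outside the support
  have hderivb : deriv u b = 0 := by
    by_contra hne
    have hc : 0 < ‖deriv u b‖ := norm_pos_iff.mpr hne
    set x := b + (2*M+1)/‖deriv u b‖ with hx
    have hbx : b ≤ x := le_add_of_nonneg_right (div_nonneg (by linarith) hc.le)
    have h1 : u x - u b = ((x - b : ℝ)) • deriv u b := by
      rw [huFTC b x, intervalIntegral.integral_congr (g := fun _ => deriv u b) ?_,
        intervalIntegral.integral_const]
      intro t ht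
      rw [Set.uIcc_of_le hbx] at ht
      exact hconstplus t ht.1
    have h2 : ‖u x - u b‖ ≤ 2*M := by
      calc ‖u x - u b‖ ≤ ‖u x‖ + ‖u b‖ := norm_sub_le _ _
      _ ≤ M + M := add_le_add (hM x) (hM b)
      _ = 2*M := by ring
    rw [h1, norm_smul, Real.norm_eq_abs,
      _root_.abs_of_nonneg (by linarith : (0:ℝ) ≤ x - b)] at h2
    have hxb : x - b = (2*M+1)/‖deriv u b‖ := by rw [hx]; ring
    rw [hxb, div_mul_cancel₀ _ (ne_of_gt hc)] at h2
    linarith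
  have hderiva : deriv u a = 0 := by
    by_contra hne
    have hc : 0 < ‖deriv u a‖ := norm_pos_iff.mpr hne
    set x := a - (2*M+1)/‖deriv u a‖ with hx
    have hbx : x ≤ a := sub_le_self _ (div_nonneg (by linarith) hc.le)
    have h1 : u a - u x = ((a - x : ℝ)) • deriv u a := by
      rw [huFTC x a, intervalIntegral.integral_congr (g := fun _ => deriv u a) ?_,
        intervalIntegral.integral_const]
      intro t ht
      rw [Set.uIcc_of_le hbx] at ht
      exact hconstminus t ht.2
    have h2 : ‖u a - u x‖ ≤ 2*M := by
      calc ‖u a - u x‖ ≤ ‖u a‖ + ‖u x‖ := norm_sub_le _ _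
      _ ≤ M + M := add_le_add (hM a) (hM x)
      _ = 2*M := by ring
    rw [h1, norm_smul, Real.norm_eq_abs,
      _root_.abs_of_nonneg (by linarith : (0:ℝ) ≤ a - x)] at h2
    have hxb : a - x = (2*M+1)/‖deriv u a‖ := by rw [hx]; ring
    rw [hxb, div_mul_cancel₀ _ (ne_of_gt hc)] at h2
    linarith
  -- Part 1
  have hsupp_h : Function.support h ⊆ Set.Ioc a b := by
    intro s hs
    have habs := hhr s hs
    obtain ⟨h1, h2⟩ := abs_le.mp habs
    exact ⟨by simp only [ha]; linarith, by simp only [hb]; linarith⟩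
  have hint_h : ∫ s : ℝ, h s = 0 := by
    rw [← intervalIntegral.integral_eq_integral_of_support_subset hsupp_h]
    have := hFTC a b
    rw [hderiva, hderivb] at this
    simpa using this.symm
  have part1 : A * (∫ y : ℝ, f y) + B * (∫ y : ℝ, g y) = 0 := by
    have hsplit : ∫ s : ℝ, h s = A * (∫ y : ℝ, f y) + B * (∫ y : ℝ, g y) := by
      simp only [hh]
      rw [integral_add (hfi.const_mul A) (hgi.const_mul B), integral_const_mul, integral_const_mul]
    rw [← hsplit]
    exact hint_h
  refine ⟨part1, ?_⟩
  -- Part 2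
  have hIic : ∀ (φ : ℝ → ℂ), Integrable φ → (∀ s : ℝ, s ≤ a → φ s = 0) →
      ∀ x : ℝ, ∫ s in Set.Iic x, φ s = ∫ s in a..x, φ s := by
    intro φ hφ hz x
    have h0 : ∫ s in Set.Iic a, φ s = 0 :=
      setIntegral_eq_zero_of_forall_eq_zero fun s hs => hz s hs
    have := intervalIntegral.integral_Iic_sub_Iic (μ := volume) (f := φ) (a := a) (b := x)
      hφ.integrableOn hφ.integrableOn
    rw [h0, sub_zero] at this
    exact this
  set h1 : ℝ → ℂ := fun s => (s:ℂ) * h s with hh1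
  have hh1c : Continuous h1 := Complex.continuous_ofReal.mul hcont
  have hh1z : ∀ s : ℝ, s ≤ a → h1 s = 0 := fun s hs => by simp [hh1, ha0 s hs]
  have hh1i : Integrable h1 := by
    refine (mul_shift_integrable h hhi r hhr 0).neg.congr ?_
    refine Eventually.of_forall fun s => ?_
    simp only [Pi.neg_apply, hh1]
    push_cast
    ring
  set F : ℝ → ℂ := fun x => ∫ s in a..x, h s with hF'
  set G1 : ℝ → ℂ := fun x => ∫ s in a..x, h1 s with hG1'
  have hF : ∀ x, HasDerivAt F (h x) x := fun x =>
    intervalIntegral.integral_hasDerivAt_right hhi.intervalIntegrable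
      (hcont.stronglyMeasurableAtFilter _ _) hcont.continuousAt
  have hG1 : ∀ x, HasDerivAt G1 (h1 x) x := fun x =>
    intervalIntegral.integral_hasDerivAt_right hh1i.intervalIntegrable
      (hh1c.stronglyMeasurableAtFilter _ _) hh1c.continuousAt
  have hu' : ∀ x, deriv u x = F x := by
    intro x
    have := hFTC a x
    rw [hderiva, sub_zero] at this
    exact this
  have hP : ∀ x : ℝ, A * pd2 f x + B * pd2 g x = (x:ℂ) * F x - G1 x := by
    intro x
    have hif : IntegrableOn (fun s : ℝ => ((x:ℂ) - (s:ℂ)) * f s) (Set.Iic x) :=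
      (mul_shift_integrable f hfi r hfr x).integrableOn
    have hig : IntegrableOn (fun s : ℝ => ((x:ℂ) - (s:ℂ)) * g s) (Set.Iic x) :=
      (mul_shift_integrable g hgi r hgr x).integrableOn
    have e1 : A * pd2 f x + B * pd2 g x = ∫ s in Set.Iic x, ((x:ℂ) - (s:ℂ)) * h s := by
      rw [pd2, pd2, ← integral_const_mul, ← integral_const_mul,
        ← integral_add (hif.const_mul A) (hig.const_mul B)]
      refine integral_congr_ae (Eventually.of_forall fun s => ?_)
      simp only [hh]
      ring
    have e2 : ∫ s in Set.Iic x, ((x:ℂ) - (s:ℂ)) * h s = (x:ℂ) * F x - G1 x := by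
      have step : ∫ s in Set.Iic x, ((x:ℂ) - (s:ℂ)) * h s
          = ∫ s in Set.Iic x, ((x:ℂ) * h s - h1 s) := by
        refine integral_congr_ae (Eventually.of_forall fun s => ?_)
        simp only [hh1]; ring
      rw [step, integral_sub ((hhi.integrableOn).const_mul (x:ℂ)) hh1i.integrableOn,
        integral_const_mul, hIic h hhi ha0 x, hIic h1 hh1i hh1z x]
    rw [e1, e2]
  -- the function u - (x F - G1) is constant
  set D : ℝ → ℂ := fun x => u x - ((x:ℂ) * F x - G1 x) with hD'
  have hD : ∀ x, HasDerivAt D 0 x := by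
    intro x
    have hx1 : HasDerivAt (fun y : ℝ => (y:ℂ)) 1 x := by
      exact Complex.ofRealCLM.hasDerivAt (x := x)
    have h2 : HasDerivAt (fun y : ℝ => (y:ℂ) * F y) (1 * F x + (x:ℂ) * h x) x :=
      hx1.mul (hF x)
    have h3 : HasDerivAt (fun y : ℝ => (y:ℂ) * F y - G1 y)
        (1 * F x + (x:ℂ) * h x - h1 x) x := h2.sub (hG1 x)
    have h4 : HasDerivAt u (deriv u x) x := (hudiff x).hasDerivAt
    have h5 := h4.sub h3
    convert h5 using 1
    · rfl
    · rfl
    rw [hu' x]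
    simp only [hh1]
    ring
  have hDconst : ∀ x : ℝ, D x = D 0 := fun x =>
    is_const_of_deriv_eq_zero (fun y => (hD y).differentiableAt)
      (fun y => (hD y).deriv) x 0
  refine ⟨D 0, fun x => ?_⟩
  have hc := hDconst x
  simp only [hD'] at hc
  rw [hP x]
  linear_combination hc
end

section
/- Let A be the 3×3 complex matrix with rows (⟨f, f⁽⁻²⁾⟩, ⟨f, g⁽⁻²⁾⟩ − 1, conj(f₀)), (⟨g, f⁽⁻²⁾⟩ − 1, ⟨g, g⁽⁻²⁾⟩, conj(g₀)), and (f₀, g₀, 0). Then det A = ‖g₀ f⁽⁻¹⁾ − f₀ g⁽⁻¹⁾‖² − 2 Re(f₀ · conj(g₀)). -/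
open MeasureTheory Complex Filter

open Set


lemma mul_cont_integrable {h : ℝ → ℂ} (hi : Integrable h) (hc : HasCompactSupport h)
    {c : ℝ → ℂ} (hcc : Continuous c) : Integrable (fun s => h s * c s) := by
  obtain ⟨C, hC⟩ := hc.exists_bound_of_continuousOn hcc.continuousOn
  refine (hi.norm.const_mul (max C 0)).mono' (hi.1.mul hcc.aestronglyMeasurable) ?_
  filter_upwards with s
  show ‖h s * c s‖ ≤ (max C 0) * ‖h s‖
  by_cases hs : s ∈ tsupport h
  · rw [norm_mul]
    calc ‖h s‖ * ‖c s‖ ≤ ‖h s‖ * max C 0 :=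
          mul_le_mul_of_nonneg_left (le_max_of_le_left (hC s hs)) (norm_nonneg _)
      _ = max C 0 * ‖h s‖ := mul_comm _ _
  · have : h s = 0 := image_eq_zero_of_notMem_tsupport hs
    simp [this]

lemma pd1_continuous {h : ℝ → ℂ} (hi : Integrable h) : Continuous (pd1 h) := by
  have heq : pd1 h = fun x => ∫ s, (Set.Iic x).indicator h s := by
    funext x; rw [pd1, integral_indicator measurableSet_Iic]
  rw [heq, continuous_iff_continuousAt]
  intro x₀
  apply continuousAt_of_dominated (bound := fun s => ‖h s‖)
  · filter_upwards with x; exact hi.1.indicator measurableSet_Iic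
  · filter_upwards with x; filter_upwards with s
    exact norm_indicator_le_norm_self h s
  · exact hi.norm
  · have hne : ∀ᵐ s : ℝ, s ≠ x₀ := by
      refine ae_iff.2 ?_
      simp [Real.volume_singleton]
    filter_upwards [hne] with s hs
    rcases lt_or_gt_of_ne hs with h1 | h1
    · apply (continuousAt_const (y := h s)).congr
      filter_upwards [Ioi_mem_nhds h1] with x hx
      exact (Set.indicator_of_mem (Set.mem_Iic.2 hx.le) h).symm
    · apply (continuousAt_const (y := (0:ℂ))).congr
      filter_upwards [Iio_mem_nhds h1] with x hx
      exact (Set.indicator_of_notMem (by simpa using not_le.2 hx) h).symm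

lemma pd1_norm_le {h : ℝ → ℂ} (hi : Integrable h) (x : ℝ) : ‖pd1 h x‖ ≤ ∫ s, ‖h s‖ := by
  calc ‖pd1 h x‖ ≤ ∫ s in Set.Iic x, ‖h s‖ := norm_integral_le_integral_norm _
    _ ≤ ∫ s, ‖h s‖ := setIntegral_le_integral hi.norm (by filter_upwards with s using norm_nonneg _)

lemma pd1_zero_of_nmem {h : ℝ → ℂ} (hi : Integrable h) (h0 : ∫ x, h x = 0)
    {R : ℝ} (hR : tsupport h ⊆ Set.Icc (-R) R) {x : ℝ} (hx : x ∉ Set.Icc (-R) R) :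
    pd1 h x = 0 := by
  rw [Set.mem_Icc, not_and_or, not_le, not_le] at hx
  rcases hx with hx | hx
  · refine setIntegral_eq_zero_of_forall_eq_zero fun s hs => ?_
    refine image_eq_zero_of_notMem_tsupport fun hmem => ?_
    have := (hR hmem).1
    simp only [Set.mem_Iic] at hs; linarith
  · have hzero : ∫ s in Set.Ioi x, h s = 0 := by
      refine setIntegral_eq_zero_of_forall_eq_zero fun s hs => ?_
      refine image_eq_zero_of_notMem_tsupport fun hmem => ?_
      have := (hR hmem).2
      simp only [Set.mem_Ioi] at hs; linarith
    have := intervalIntegral.integral_Iic_add_Ioi (b := x) hi.integrableOn hi.integrableOn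
    rw [h0, hzero] at this
    simpa [pd1] using this

lemma pd2_eq {h : ℝ → ℂ} (hi : Integrable h) (hc : HasCompactSupport h) (x : ℝ) :
    pd2 h x = (x : ℂ) * pd1 h x - pd1 (fun s => (s : ℂ) * h s) x := by
  have h1 : IntegrableOn h (Set.Iic x) := hi.integrableOn
  have h2 : IntegrableOn (fun s : ℝ => (s : ℂ) * h s) (Set.Iic x) := by
    have := mul_cont_integrable hi hc (c := fun s : ℝ => (s : ℂ)) (by fun_prop)
    exact (this.congr (by filter_upwards with s using mul_comm _ _)).integrableOn
  rw [pd2, pd1, pd1]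
  rw [show (fun s : ℝ => ((x : ℂ) - s) * h s) = fun s : ℝ => (x : ℂ) * h s - (s : ℂ) * h s by
    funext s; ring]
  rw [integral_sub (h1.const_mul _) h2, integral_const_mul]
lemma conj_mul_self_eq (z : ℂ) : (starRingEnd ℂ) z * z = ((‖z‖^2 : ℝ) : ℂ) := by
  rw [← Complex.normSq_eq_conj_mul_self]; norm_cast
  rw [Complex.normSq_eq_norm_sq]

lemma fubini1 {φ : ℝ → ℂ} (hφi : Integrable φ) {R : ℝ} (hR : tsupport φ ⊆ Set.Icc (-R) R)
    (t : ℝ) : ∫ x in Set.Iic t, pd1 φ x = pd2 φ t := by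
  set A : Set (ℝ × ℝ) := {p : ℝ × ℝ | p.2 ≤ p.1 ∧ p.1 ≤ t} with hA
  have hAm : MeasurableSet A := (measurableSet_le measurable_snd measurable_fst).inter
    (measurableSet_le measurable_fst measurable_const)
  set F : ℝ → ℝ → ℂ := fun x s => A.indicator (fun p => φ p.2) (x, s) with hF
  have hFint : Integrable (Function.uncurry F) (volume.prod volume) := by
    have hbound : Integrable (fun p : ℝ × ℝ =>
        (Set.Icc (-R) t).indicator (fun _ => (1:ℝ)) p.1 * ‖φ p.2‖) (volume.prod volume) :=
      Integrable.mul_prod ((integrable_indicator_iff measurableSet_Icc).2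
        (integrableOn_const measure_Icc_lt_top.ne)) hφi.norm
    refine hbound.mono' ((hφi.1.comp_snd).indicator hAm) ?_
    filter_upwards with p
    show ‖A.indicator (fun p => φ p.2) p‖ ≤ _
    by_cases hp : p ∈ A
    · rw [Set.indicator_of_mem hp]
      by_cases h2 : φ p.2 = 0
      · rw [h2]; simp
      · have hmem : p.2 ∈ tsupport φ := subset_tsupport φ (by exact h2)
        have h1 : p.1 ∈ Set.Icc (-R) t := ⟨le_trans (hR hmem).1 hp.1, hp.2⟩
        rw [Set.indicator_of_mem h1, one_mul]
    · rw [Set.indicator_of_notMem hp]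
      simp only [norm_zero]
      exact mul_nonneg (Set.indicator_nonneg (fun _ _ => zero_le_one) _) (norm_nonneg _)
  have hswap := integral_integral_swap hFint
  have inner1 : ∀ x, (∫ s, F x s) = (Set.Iic t).indicator (pd1 φ) x := by
    intro x
    by_cases hx : x ≤ t
    · have he : ∀ s, F x s = (Set.Iic x).indicator φ s := by
        intro s
        by_cases hs : s ≤ x
        · show A.indicator (fun p => φ p.2) (x, s) = _
          rw [Set.indicator_of_mem (show (x,s) ∈ A from ⟨hs, hx⟩),
            Set.indicator_of_mem (Set.mem_Iic.2 hs)]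
        · show A.indicator (fun p => φ p.2) (x, s) = _
          rw [Set.indicator_of_notMem (show (x,s) ∉ A from fun hc => hs hc.1),
            Set.indicator_of_notMem (by simpa using hs)]
      simp only [he]
      rw [integral_indicator measurableSet_Iic, Set.indicator_of_mem (Set.mem_Iic.2 hx)]
      rfl
    · have he : ∀ s, F x s = 0 := by
        intro s
        show A.indicator (fun p => φ p.2) (x, s) = _
        rw [Set.indicator_of_notMem (show (x,s) ∉ A from fun hc => hx hc.2)]
      simp only [he]
      rw [integral_zero, Set.indicator_of_notMem (by simpa using hx)]
  have inner2 : ∀ s, (∫ x, F x s)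
      = (Set.Iic t).indicator (fun s : ℝ => ((t:ℂ) - (s:ℂ)) * φ s) s := by
    intro s
    have he : ∀ x, F x s = (Set.Icc s t).indicator (fun _ => φ s) x := by
      intro x
      by_cases hx : s ≤ x ∧ x ≤ t
      · show A.indicator (fun p => φ p.2) (x, s) = _
        rw [Set.indicator_of_mem (show (x,s) ∈ A from ⟨hx.1, hx.2⟩),
          Set.indicator_of_mem (Set.mem_Icc.2 hx)]
      · show A.indicator (fun p => φ p.2) (x, s) = _
        rw [Set.indicator_of_notMem (show (x,s) ∉ A from fun hc => hx ⟨hc.1, hc.2⟩),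
          Set.indicator_of_notMem (by simpa using hx)]
    simp only [he]
    rw [integral_indicator_const _ measurableSet_Icc]
    by_cases hst : s ≤ t
    · rw [Set.indicator_of_mem (Set.mem_Iic.2 hst), Real.volume_real_Icc_of_le hst,
        Complex.real_smul]
      push_cast; ring
    · rw [Set.indicator_of_notMem (by simpa using hst), Real.volume_real_Icc]
      rw [max_eq_right (by linarith : t - s ≤ 0)]
      simp
  calc ∫ x in Set.Iic t, pd1 φ x = ∫ x, (Set.Iic t).indicator (pd1 φ) x :=
        (integral_indicator measurableSet_Iic).symm
    _ = ∫ x, ∫ s, F x s := by simp only [inner1]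
    _ = ∫ s, ∫ x, F x s := hswap
    _ = ∫ s, (Set.Iic t).indicator (fun s : ℝ => ((t:ℂ) - (s:ℂ)) * φ s) s := by simp only [inner2]
    _ = ∫ s in Set.Iic t, ((t:ℂ) - (s:ℂ)) * φ s := integral_indicator measurableSet_Iic
    _ = pd2 φ t := rfl
lemma key {φ : ℝ → ℂ} (hφi : Integrable φ) (hφc : HasCompactSupport φ)
    (hφ0 : ∫ x, φ x = 0) :
    ((∫ x : ℝ, ‖pd1 φ x‖ ^ 2 : ℝ) : ℂ) = - ∫ t : ℝ, (starRingEnd ℂ) (φ t) * pd2 φ t := by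
  obtain ⟨R, hR⟩ : ∃ R : ℝ, tsupport φ ⊆ Set.Icc (-R) R := by
    obtain ⟨R, hR⟩ := hφc.isBounded.subset_closedBall 0
    exact ⟨R, by rwa [Real.closedBall_eq_Icc, zero_sub, zero_add] at hR⟩
  have hΦc : Continuous (pd1 φ) := pd1_continuous hφi
  have hΦ0 : ∀ x, x ∉ Set.Icc (-R) R → pd1 φ x = 0 :=
    fun x hx => pd1_zero_of_nmem hφi hφ0 hR hx
  have hΦneg : ∀ x, ∫ s in Set.Ioi x, φ s = - pd1 φ x := by
    intro x
    have h := intervalIntegral.integral_Iic_add_Ioi (b := x) hφi.integrableOn hφi.integrableOn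
    rw [hφ0] at h
    have : pd1 φ x + ∫ s in Set.Ioi x, φ s = 0 := h
    linear_combination this
  set B : Set (ℝ × ℝ) := {p : ℝ × ℝ | p.1 < p.2} with hB
  have hBm : MeasurableSet B := measurableSet_lt measurable_fst measurable_snd
  set F : ℝ → ℝ → ℂ :=
    fun x t => B.indicator (fun p => (starRingEnd ℂ) (φ p.2) * pd1 φ p.1) (x, t) with hF
  have hFaesm : AEStronglyMeasurable (Function.uncurry F) (volume.prod volume) := by
    apply AEStronglyMeasurable.indicator _ hBm
    exact ((RCLike.continuous_conj.comp_aestronglyMeasurable hφi.1).comp_snd).mul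
      (hΦc.aestronglyMeasurable.comp_fst)
  have hFint : Integrable (Function.uncurry F) (volume.prod volume) := by
    have hbound : Integrable (fun p : ℝ × ℝ =>
        (Set.Icc (-R) R).indicator (fun _ => ∫ s, ‖φ s‖) p.1 * ‖φ p.2‖) (volume.prod volume) :=
      Integrable.mul_prod ((integrable_indicator_iff measurableSet_Icc).2
        (integrableOn_const measure_Icc_lt_top.ne)) hφi.norm
    refine hbound.mono' hFaesm ?_
    filter_upwards with p
    show ‖B.indicator (fun p => (starRingEnd ℂ) (φ p.2) * pd1 φ p.1) p‖ ≤ (Set.Icc (-R) R).indicator (fun _ => ∫ s, ‖φ s‖) p.1 * ‖φ p.2‖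
    by_cases hp : p ∈ B
    · rw [Set.indicator_of_mem hp, norm_mul, RCLike.norm_conj, mul_comm]
      by_cases h1 : pd1 φ p.1 = 0
      · rw [h1, norm_zero, zero_mul]
        exact mul_nonneg (Set.indicator_nonneg (fun s _ => by positivity) _) (norm_nonneg _)
      · have h1m : p.1 ∈ Set.Icc (-R) R := by
          by_contra hc; exact h1 (hΦ0 _ hc)
        rw [Set.indicator_of_mem h1m]
        exact mul_le_mul_of_nonneg_right (pd1_norm_le hφi _) (norm_nonneg _)
    · rw [Set.indicator_of_notMem hp]
      simp only [norm_zero]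
      exact mul_nonneg (Set.indicator_nonneg (fun s _ => by positivity) _) (norm_nonneg _)
  have hswap := integral_integral_swap hFint
  have inner1 : ∀ x, (∫ t, F x t) = -((‖pd1 φ x‖^2 : ℝ) : ℂ) := by
    intro x
    have he : ∀ t, F x t = (Set.Ioi x).indicator
        (fun t => (starRingEnd ℂ) (φ t) * pd1 φ x) t := by
      intro t
      by_cases ht : x < t
      · show B.indicator _ (x, t) = _
        rw [Set.indicator_of_mem (show (x,t) ∈ B from ht),
          Set.indicator_of_mem (Set.mem_Ioi.2 ht)]
      · show B.indicator _ (x, t) = _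
        rw [Set.indicator_of_notMem (show (x,t) ∉ B from ht),
          Set.indicator_of_notMem (by simpa using ht)]
    simp only [he]
    rw [integral_indicator measurableSet_Ioi, integral_mul_const, integral_conj, hΦneg x,
      map_neg, neg_mul, conj_mul_self_eq]
  have inner2 : ∀ t, (∫ x, F x t) = (starRingEnd ℂ) (φ t) * pd2 φ t := by
    intro t
    have he : ∀ x, F x t = (Set.Iio t).indicator
        (fun x => (starRingEnd ℂ) (φ t) * pd1 φ x) x := by
      intro x
      by_cases hx : x < t
      · show B.indicator _ (x, t) = _
        rw [Set.indicator_of_mem (show (x,t) ∈ B from hx),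
          Set.indicator_of_mem (Set.mem_Iio.2 hx)]
      · show B.indicator _ (x, t) = _
        rw [Set.indicator_of_notMem (show (x,t) ∉ B from hx),
          Set.indicator_of_notMem (by simpa using hx)]
    simp only [he]
    rw [integral_indicator measurableSet_Iio, integral_const_mul,
      ← integral_Iic_eq_integral_Iio, fubini1 hφi hR t]
  calc ((∫ x : ℝ, ‖pd1 φ x‖ ^ 2 : ℝ) : ℂ) = ∫ x : ℝ, ((‖pd1 φ x‖ ^ 2 : ℝ) : ℂ) :=
        integral_ofReal.symm
    _ = - ∫ x, ∫ t, F x t := by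
        simp only [inner1]; rw [integral_neg, neg_neg]
    _ = - ∫ t, ∫ x, F x t := by rw [hswap]
    _ = - ∫ t : ℝ, (starRingEnd ℂ) (φ t) * pd2 φ t := by simp only [inner2]
theorem det_A_eq
    (f g : ℝ → ℂ)
    (hfi : Integrable f) (hgi : Integrable g)
    (hf2 : MemLp f 2) (hg2 : MemLp g 2)
    (hfc : HasCompactSupport f) (hgc : HasCompactSupport g) :
    Matrix.det
      !![ip f (pd2 f), ip f (pd2 g) - 1, (starRingEnd ℂ) (∫ y : ℝ, f y);
         ip g (pd2 f) - 1, ip g (pd2 g), (starRingEnd ℂ) (∫ y : ℝ, g y);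
         (∫ y : ℝ, f y), (∫ y : ℝ, g y), 0]
    = ((∫ x : ℝ, ‖(∫ y : ℝ, g y) * pd1 f x - (∫ y : ℝ, f y) * pd1 g x‖ ^ 2 : ℝ) : ℂ)
      - 2 * (((∫ y : ℝ, f y) * (starRingEnd ℂ) (∫ y : ℝ, g y)).re : ℂ) := by
  set f₀ : ℂ := ∫ y : ℝ, f y with hf₀
  set g₀ : ℂ := ∫ y : ℝ, g y with hg₀
  set φ : ℝ → ℂ := fun x => g₀ * f x - f₀ * g x with hφ
  have hφi : Integrable φ := (hfi.const_mul g₀).sub (hgi.const_mul f₀)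
  have hφc : HasCompactSupport φ := by
    apply HasCompactSupport.intro (hfc.union hgc)
    intro x hx
    rw [Set.mem_union, not_or] at hx
    have h1 : f x = 0 := image_eq_zero_of_notMem_tsupport hx.1
    have h2 : g x = 0 := image_eq_zero_of_notMem_tsupport hx.2
    simp [hφ, h1, h2]
  have hφ0 : ∫ x, φ x = 0 := by
    rw [hφ]
    rw [integral_sub (hfi.const_mul g₀) (hgi.const_mul f₀), integral_const_mul, integral_const_mul,
      ← hf₀, ← hg₀]
    ring
  -- integrability of s*v
  have hsf : Integrable (fun s : ℝ => (s:ℂ) * f s) :=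
    (mul_cont_integrable hfi hfc (c := fun s : ℝ => (s:ℂ)) (by fun_prop)).congr
      (by filter_upwards with s using mul_comm _ _)
  have hsg : Integrable (fun s : ℝ => (s:ℂ) * g s) :=
    (mul_cont_integrable hgi hgc (c := fun s : ℝ => (s:ℂ)) (by fun_prop)).congr
      (by filter_upwards with s using mul_comm _ _)
  have hpd2fc : Continuous (pd2 f) := by
    have : pd2 f = fun x : ℝ => (x:ℂ) * pd1 f x - pd1 (fun s : ℝ => (s:ℂ) * f s) x :=
      funext (pd2_eq hfi hfc)
    rw [this]
    exact ((Complex.continuous_ofReal.mul (pd1_continuous hfi))).sub (pd1_continuous hsf)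
  have hpd2gc : Continuous (pd2 g) := by
    have : pd2 g = fun x : ℝ => (x:ℂ) * pd1 g x - pd1 (fun s : ℝ => (s:ℂ) * g s) x :=
      funext (pd2_eq hgi hgc)
    rw [this]
    exact ((Complex.continuous_ofReal.mul (pd1_continuous hgi))).sub (pd1_continuous hsg)
  -- integrability of conj u * pd2 v
  have hconj : ∀ (u : ℝ → ℂ), Integrable u → HasCompactSupport u →
      Integrable (fun x => (starRingEnd ℂ) (u x)) ∧
      HasCompactSupport (fun x => (starRingEnd ℂ) (u x)) := by
    intro u hu huc
    constructor
    · exact hu.norm.mono' (RCLike.continuous_conj.comp_aestronglyMeasurable hu.1)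
        (by filter_upwards with x using le_of_eq (RCLike.norm_conj _))
    · exact huc.comp_left (map_zero _)
  have hint : ∀ (u v : ℝ → ℂ), Integrable u → HasCompactSupport u → Continuous (pd2 v) →
      Integrable (fun x => (starRingEnd ℂ) (u x) * pd2 v x) := by
    intro u v hu huc hvc
    exact mul_cont_integrable (hconj u hu huc).1 (hconj u hu huc).2 hvc
  have Iff' := hint f f hfi hfc hpd2fc
  have Ifg := hint f g hfi hfc hpd2gc
  have Igf := hint g f hgi hgc hpd2fc
  have Igg := hint g g hgi hgc hpd2gc
  -- pd1 linearity
  have hpd1lin : ∀ x, g₀ * pd1 f x - f₀ * pd1 g x = pd1 φ x := by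
    intro x
    rw [pd1, pd1, pd1, hφ]
    rw [integral_sub ((hfi.integrableOn).const_mul g₀) ((hgi.integrableOn).const_mul f₀),
      integral_const_mul, integral_const_mul]
  -- pd2 linearity
  have hpd2lin : ∀ x, pd2 φ x = g₀ * pd2 f x - f₀ * pd2 g x := by
    intro x
    have h1 : IntegrableOn (fun s : ℝ => ((x:ℂ) - s) * f s) (Set.Iic x) :=
      ((mul_cont_integrable hfi hfc (c := fun s : ℝ => ((x:ℂ) - s)) (by fun_prop)).congr
        (by filter_upwards with s using mul_comm _ _)).integrableOn
    have h2 : IntegrableOn (fun s : ℝ => ((x:ℂ) - s) * g s) (Set.Iic x) :=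
      ((mul_cont_integrable hgi hgc (c := fun s : ℝ => ((x:ℂ) - s)) (by fun_prop)).congr
        (by filter_upwards with s using mul_comm _ _)).integrableOn
    rw [pd2, pd2, pd2, hφ]
    have he : ∀ s : ℝ, ((x:ℂ) - s) * (g₀ * f s - f₀ * g s)
        = g₀ * (((x:ℂ) - s) * f s) - f₀ * (((x:ℂ) - s) * g s) := by intro s; ring
    simp only [he]
    rw [integral_sub (h1.const_mul g₀) (h2.const_mul f₀), integral_const_mul, integral_const_mul]
  -- expansion of the key integral
  have hpt : ∀ t, (starRingEnd ℂ) (φ t) * pd2 φ t =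
      ((starRingEnd ℂ) g₀ * g₀) * ((starRingEnd ℂ) (f t) * pd2 f t)
      - ((starRingEnd ℂ) g₀ * f₀) * ((starRingEnd ℂ) (f t) * pd2 g t)
      - ((starRingEnd ℂ) f₀ * g₀) * ((starRingEnd ℂ) (g t) * pd2 f t)
      + ((starRingEnd ℂ) f₀ * f₀) * ((starRingEnd ℂ) (g t) * pd2 g t) := by
    intro t
    rw [hpd2lin t, hφ]
    simp only [map_sub, map_mul]
    ring
  have hE : ∫ t, (starRingEnd ℂ) (φ t) * pd2 φ t =
      ((starRingEnd ℂ) g₀ * g₀) * ip f (pd2 f)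
      - ((starRingEnd ℂ) g₀ * f₀) * ip f (pd2 g)
      - ((starRingEnd ℂ) f₀ * g₀) * ip g (pd2 f)
      + ((starRingEnd ℂ) f₀ * f₀) * ip g (pd2 g) := by
    have I1 : Integrable (fun t => ((starRingEnd ℂ) g₀ * g₀) * ((starRingEnd ℂ) (f t) * pd2 f t)) :=
      Iff'.const_mul _
    have I2 : Integrable (fun t => ((starRingEnd ℂ) g₀ * f₀) * ((starRingEnd ℂ) (f t) * pd2 g t)) :=
      Ifg.const_mul _
    have I3 : Integrable (fun t => ((starRingEnd ℂ) f₀ * g₀) * ((starRingEnd ℂ) (g t) * pd2 f t)) :=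
      Igf.const_mul _
    have I4 : Integrable (fun t => ((starRingEnd ℂ) f₀ * f₀) * ((starRingEnd ℂ) (g t) * pd2 g t)) :=
      Igg.const_mul _
    have I12 : Integrable (fun t => ((starRingEnd ℂ) g₀ * g₀) * ((starRingEnd ℂ) (f t) * pd2 f t)
        - ((starRingEnd ℂ) g₀ * f₀) * ((starRingEnd ℂ) (f t) * pd2 g t)) := I1.sub I2
    have I123 : Integrable (fun t => (((starRingEnd ℂ) g₀ * g₀) * ((starRingEnd ℂ) (f t) * pd2 f t)
        - ((starRingEnd ℂ) g₀ * f₀) * ((starRingEnd ℂ) (f t) * pd2 g t))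
        - ((starRingEnd ℂ) f₀ * g₀) * ((starRingEnd ℂ) (g t) * pd2 f t)) := I12.sub I3
    simp only [hpt]
    rw [integral_add I123 I4, integral_sub I12 I3, integral_sub I1 I2,
      integral_const_mul, integral_const_mul, integral_const_mul, integral_const_mul]
    rfl
  have hL : ((∫ x : ℝ, ‖g₀ * pd1 f x - f₀ * pd1 g x‖ ^ 2 : ℝ) : ℂ)
      = - (((starRingEnd ℂ) g₀ * g₀) * ip f (pd2 f)
      - ((starRingEnd ℂ) g₀ * f₀) * ip f (pd2 g)
      - ((starRingEnd ℂ) f₀ * g₀) * ip g (pd2 f)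
      + ((starRingEnd ℂ) f₀ * f₀) * ip g (pd2 g)) := by
    rw [show (∫ x : ℝ, ‖g₀ * pd1 f x - f₀ * pd1 g x‖ ^ 2 : ℝ)
        = ∫ x : ℝ, ‖pd1 φ x‖ ^ 2 by simp only [hpd1lin]]
    rw [key hφi hφc hφ0, hE]
  have hRe : 2 * ((f₀ * (starRingEnd ℂ) g₀).re : ℂ)
      = f₀ * (starRingEnd ℂ) g₀ + (starRingEnd ℂ) f₀ * g₀ := by
    have h := Complex.add_conj (f₀ * (starRingEnd ℂ) g₀)
    rw [map_mul, Complex.conj_conj] at h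
    push_cast at h
    linear_combination -h
  rw [hL, hRe, Matrix.det_fin_three]
  simp only [Matrix.of_apply, Matrix.cons_val', Matrix.cons_val_zero, Matrix.cons_val_one,
    Matrix.head_cons, Matrix.empty_val', Matrix.cons_val_fin_one, Matrix.head_fin_const,
    Matrix.cons_val_two, Matrix.tail_cons]
  ring
end

section
/- Assume the supports of f and g are contained in [−1, 1]. Then σ is constant on (−∞, −1] and constant on [1, +∞), so the limits σ₋ = lim_{x→−∞} σ(x) and σ₊ = lim_{x→+∞} σ(x) exist, and σ₊ − σ₋ = conj(f₀) · conj(g₀) · (f₀ g₁ − f₁ g₀). -/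
open MeasureTheory Complex Filter

/-- The function `σ` from the paper. -/
noncomputable def sigmaFn (f g : ℝ → ℂ) (x : ℝ) : ℂ :=
  ((‖∫ y : ℝ, g y‖ : ℂ)) ^ 2 *
      ((starRingEnd ℂ) (∫ y : ℝ, f y) * pd2 f x - ip f (pd2 f))
    - ((‖∫ y : ℝ, f y‖ : ℂ)) ^ 2 *
      ((starRingEnd ℂ) (∫ y : ℝ, g y) * pd2 g x - ip g (pd2 g))

lemma int_xh (h : ℝ → ℂ) (hh : Integrable h) (hc : tsupport h ⊆ Set.Icc (-1 : ℝ) 1) :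
    Integrable (fun s : ℝ => (s : ℂ) * h s) := by
  refine Integrable.mono' hh.norm
    (Complex.continuous_ofReal.aestronglyMeasurable.mul hh.1) (ae_of_all _ fun s => ?_)
  by_cases hs : h s = 0
  · simp [hs]
  · have hmem : s ∈ Set.Icc (-1 : ℝ) 1 := hc (subset_tsupport h hs)
    have : |s| ≤ 1 := abs_le.2 ⟨hmem.1, hmem.2⟩
    calc ‖(s : ℂ) * h s‖ = |s| * ‖h s‖ := by simp [Complex.norm_real]
    _ ≤ 1 * ‖h s‖ := by gcongr
    _ = ‖h s‖ := one_mul _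

lemma pd2_left (h : ℝ → ℂ) (hc : tsupport h ⊆ Set.Icc (-1 : ℝ) 1)
    {x : ℝ} (hx : x ≤ -1) : pd2 h x = 0 := by
  rw [pd2]
  refine integral_eq_zero_of_ae ?_
  rw [EventuallyEq, ae_restrict_iff' measurableSet_Iic]
  have hne : ∀ᵐ s : ℝ, s ∉ ({-1} : Set ℝ) :=
    measure_eq_zero_iff_ae_notMem.mp Real.volume_singleton
  filter_upwards [hne] with s hs hsx
  have : h s = 0 := by
    apply image_eq_zero_of_notMem_tsupport
    intro hmem
    have := (hc hmem).1
    have : s = -1 := le_antisymm (hsx.trans hx) this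
    exact hs (by simp [this])
  simp [this]

lemma pd2_right (h : ℝ → ℂ) (hh : Integrable h) (hc : tsupport h ⊆ Set.Icc (-1 : ℝ) 1)
    {x : ℝ} (hx : (1 : ℝ) ≤ x) :
    pd2 h x = (x : ℂ) * (∫ y : ℝ, h y) - ∫ y : ℝ, (y : ℂ) * h y := by
  rw [pd2, setIntegral_eq_integral_of_forall_compl_eq_zero]
  · have heq : ∀ s : ℝ, ((x : ℂ) - s) * h s = (x : ℂ) * h s - (s : ℂ) * h s :=
      fun s => by ring
    simp_rw [heq]
    rw [integral_sub (hh.const_mul _) (int_xh h hh hc), integral_const_mul]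
  · intro s hs
    simp only [Set.mem_Iic, not_le] at hs
    have : h s = 0 := by
      apply image_eq_zero_of_notMem_tsupport
      intro hmem
      exact absurd (hc hmem).2 (by linarith)
    simp [this]

lemma abs_sq' (z : ℂ) : ((‖z‖ : ℂ)) ^ 2 = (starRingEnd ℂ) z * z := by
  rw [← Complex.ofReal_pow, Complex.sq_norm, Complex.normSq_eq_conj_mul_self]

theorem sigma_jump
    (f g : ℝ → ℂ)
    (hfi : Integrable f) (hgi : Integrable g)
    (hf2 : MemLp f 2) (hg2 : MemLp g 2)
    (hfc : tsupport f ⊆ Set.Icc (-1 : ℝ) 1) (hgc : tsupport g ⊆ Set.Icc (-1 : ℝ) 1) :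
    ∃ cm cp : ℂ,
      (∀ x : ℝ, x ≤ -1 → sigmaFn f g x = cm) ∧
      (∀ x : ℝ, 1 ≤ x → sigmaFn f g x = cp) ∧
      Tendsto (sigmaFn f g) atBot (nhds cm) ∧
      Tendsto (sigmaFn f g) atTop (nhds cp) ∧
      cp - cm
        = (starRingEnd ℂ) (∫ y : ℝ, f y) * (starRingEnd ℂ) (∫ y : ℝ, g y) *
            ((∫ y : ℝ, f y) * (∫ y : ℝ, (y : ℂ) * g y)
              - (∫ y : ℝ, (y : ℂ) * f y) * (∫ y : ℝ, g y)) := by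
  set F0 : ℂ := ∫ y : ℝ, f y with hF0
  set G0 : ℂ := ∫ y : ℝ, g y with hG0
  set F1 : ℂ := ∫ y : ℝ, (y : ℂ) * f y with hF1
  set G1 : ℂ := ∫ y : ℝ, (y : ℂ) * g y with hG1
  set A : ℂ := ((‖G0‖ : ℂ)) ^ 2 with hA
  set B : ℂ := ((‖F0‖ : ℂ)) ^ 2 with hB
  have hA2 : A = (starRingEnd ℂ) G0 * G0 := by rw [hA, abs_sq']
  have hB2 : B = (starRingEnd ℂ) F0 * F0 := by rw [hB, abs_sq']
  set cm : ℂ := A * (0 - ip f (pd2 f)) - B * (0 - ip g (pd2 g)) with hcm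
  set cp : ℂ := A * ((starRingEnd ℂ) F0 * (-F1) - ip f (pd2 f))
      - B * ((starRingEnd ℂ) G0 * (-G1) - ip g (pd2 g)) with hcp
  have hm : ∀ x : ℝ, x ≤ -1 → sigmaFn f g x = cm := by
    intro x hx
    simp only [sigmaFn, pd2_left f hfc hx, pd2_left g hgc hx, ← hF0, ← hG0, ← hA, ← hB, hcm]
    ring
  have hp : ∀ x : ℝ, 1 ≤ x → sigmaFn f g x = cp := by
    intro x hx
    simp only [sigmaFn, pd2_right f hfi hfc hx, pd2_right g hgi hgc hx,
      ← hF0, ← hG0, ← hF1, ← hG1, ← hA, ← hB, hcp, hA2, hB2]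
    ring
  refine ⟨cm, cp, hm, hp, ?_, ?_, ?_⟩
  · refine Tendsto.congr' ?_ tendsto_const_nhds
    filter_upwards [eventually_le_atBot (-1 : ℝ)] with x hx
    exact (hm x hx).symm
  · refine Tendsto.congr' ?_ tendsto_const_nhds
    filter_upwards [eventually_ge_atTop (1 : ℝ)] with x hx
    exact (hp x hx).symm
  · rw [hcp, hcm, hA2, hB2]
    ring
end

section
/- There exists a constant C > 0 with the following property: for every ε > 0 and every function w : ℝ → ℂ that is twice continuously differentiable on each of the intervals (−∞, −ε), (−ε, ε), (ε, ∞) and such that w and w' have finite one-sided limits at −ε and at ε, there exists a function ρ : ℝ → ℂ with compact support, vanishing on (−ε, ε), twice continuously differentiable on ℝ \ {−ε, ε}, such that w + ρ and its first derivative extend continuously across −ε and ε (i.e. [w+ρ]_{−ε} = [w+ρ]_{ε} = [(w+ρ)']_{−ε} = [(w+ρ)']_{ε} = 0), and |ρ(x)| + |ρ'(x)| + |ρ''(x)| ≤ C (|[w]_{−ε}| + |[w]_{ε}| + |[w']_{−ε}| + |[w']_{ε}|) for all x with |x| ≥ ε, x ≠ ±ε. -/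
open MeasureTheory Complex Filter Set

noncomputable def myB : ContDiffBump (0:ℝ) := ⟨1, 2, one_pos, one_lt_two⟩
noncomputable def phi : ℝ → ℝ := ⇑myB
noncomputable def psi : ℝ → ℂ := fun t => ((phi t : ℝ) : ℂ)
noncomputable def psi1 : ℝ → ℂ := fun t => ((deriv phi t : ℝ) : ℂ)
noncomputable def psi2 : ℝ → ℂ := fun t => ((deriv (deriv phi) t : ℝ) : ℂ)
noncomputable def G (a b : ℂ) (t : ℝ) : ℂ := (a + b*t) * psi t
noncomputable def G1 (a b : ℂ) (t : ℝ) : ℂ := b * psi t + (a + b*t) * psi1 t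
noncomputable def G2 (a b : ℂ) (t : ℝ) : ℂ := 2*b * psi1 t + (a + b*t) * psi2 t

lemma phi_contDiff : ContDiff ℝ (↑(⊤:ℕ∞)) phi := myB.contDiff
lemma dphi_contDiff : ContDiff ℝ (↑(⊤:ℕ∞)) (deriv phi) := by
  simpa using ContDiff.iterate_deriv 1 phi_contDiff
lemma ddphi_contDiff : ContDiff ℝ (↑(⊤:ℕ∞)) (deriv (deriv phi)) := by
  have := ContDiff.iterate_deriv 2 phi_contDiff
  simpa [Function.iterate_succ, Function.comp] using this

lemma one_le_coetop : (1 : WithTop ℕ∞) ≤ ↑(⊤:ℕ∞) := by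
  rw [show ((1:WithTop ℕ∞)) = ((1:ℕ∞):WithTop ℕ∞) by rfl]
  exact WithTop.coe_le_coe.mpr le_top
lemma two_le_coetop : (2 : WithTop ℕ∞) ≤ ↑(⊤:ℕ∞) := by
  rw [show ((2:WithTop ℕ∞)) = ((2:ℕ∞):WithTop ℕ∞) by rfl]
  exact WithTop.coe_le_coe.mpr le_top

lemma hasDerivAt_psi (t : ℝ) : HasDerivAt psi (psi1 t) t :=
  ((phi_contDiff.differentiable (zero_lt_one.trans_le one_le_coetop).ne').differentiableAt.hasDerivAt).ofReal_comp
lemma hasDerivAt_psi1 (t : ℝ) : HasDerivAt psi1 (psi2 t) t :=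
  ((dphi_contDiff.differentiable (zero_lt_one.trans_le one_le_coetop).ne').differentiableAt.hasDerivAt).ofReal_comp

lemma hasDerivAt_affine (a b : ℂ) (t : ℝ) :
    HasDerivAt (fun t : ℝ => a + b * t) b t := by
  have h : HasDerivAt (fun t : ℝ => (t:ℂ)) 1 t := (hasDerivAt_id t).ofReal_comp
  simpa using (h.const_mul b).const_add a

lemma hasDerivAt_G (a b : ℂ) (t : ℝ) : HasDerivAt (G a b) (G1 a b t) t :=
  (hasDerivAt_affine a b t).mul (hasDerivAt_psi t)

lemma hasDerivAt_G1 (a b : ℂ) (t : ℝ) : HasDerivAt (G1 a b) (G2 a b t) t := by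
  have h1 : HasDerivAt (fun t : ℝ => b * psi t) (b * psi1 t) t :=
    (hasDerivAt_psi t).const_mul b
  have h2 : HasDerivAt (fun t : ℝ => (a + b*t) * psi1 t)
      (b * psi1 t + (a + b*t) * psi2 t) t :=
    (hasDerivAt_affine a b t).mul (hasDerivAt_psi1 t)
  have h := h1.add h2
  rw [show G2 a b t = b * psi1 t + (b * psi1 t + (a + b*t) * psi2 t) by simp only [G2]; ring]
  exact h

lemma contDiff_G (a b : ℂ) : ContDiff ℝ 2 (G a b) := by
  have h1 : ContDiff ℝ 2 (fun t : ℝ => a + b * (t:ℂ)) :=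
    contDiff_const.add (contDiff_const.mul Complex.ofRealCLM.contDiff)
  have h2 : ContDiff ℝ 2 psi :=
    Complex.ofRealCLM.contDiff.comp (phi_contDiff.of_le two_le_coetop)
  exact h1.mul h2

lemma continuous_G1 (a b : ℂ) : Continuous (G1 a b) := by
  have h1 : Continuous (fun t : ℝ => a + b * (t:ℂ)) := by continuity
  have h2 : Continuous psi := Complex.continuous_ofReal.comp phi_contDiff.continuous
  have h3 : Continuous psi1 := Complex.continuous_ofReal.comp dphi_contDiff.continuous
  exact ((continuous_const.mul h2)).add (h1.mul h3)

lemma hasDerivAt_G_shift (a b : ℂ) (c x : ℝ) :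
    HasDerivAt (fun y => G a b (y + c)) (G1 a b (x + c)) x := by
  have hin : HasDerivAt (fun y : ℝ => y + c) 1 x := by
    simpa using (hasDerivAt_id x).add_const c
  have h := (hasDerivAt_G a b (x + c)).scomp x hin
  simpa [Function.comp_def] using h

lemma hasDerivAt_G1_shift (a b : ℂ) (c x : ℝ) :
    HasDerivAt (fun y => G1 a b (y + c)) (G2 a b (x + c)) x := by
  have hin : HasDerivAt (fun y : ℝ => y + c) 1 x := by
    simpa using (hasDerivAt_id x).add_const c
  have h := (hasDerivAt_G1 a b (x + c)).scomp x hin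
  simpa [Function.comp_def] using h

lemma contDiff_G_shift (a b : ℂ) (c : ℝ) : ContDiff ℝ 2 (fun y => G a b (y + c)) :=
  (contDiff_G a b).comp (contDiff_id.add contDiff_const)

lemma psi_zero : psi 0 = 1 := by
  have h := myB.eventuallyEq_one.eq_of_nhds
  simp only [psi, phi]
  rw [h]; norm_num
lemma psi1_zero : psi1 0 = 0 := by
  have h : deriv phi 0 = deriv (fun _ : ℝ => (1:ℝ)) 0 :=
    Filter.EventuallyEq.deriv_eq (by simpa [phi, Pi.one_def] using myB.eventuallyEq_one)
  simp [psi1, h]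
lemma G_zero (a b : ℂ) : G a b 0 = a := by simp [G, psi_zero]
lemma G1_zero (a b : ℂ) : G1 a b 0 = b := by simp [G1, psi_zero, psi1_zero]

lemma phi_zero_of_two_le {t : ℝ} (ht : 2 ≤ |t|) : phi t = 0 :=
  myB.zero_of_le_dist (by simpa [Real.dist_eq, myB] using ht)
lemma G_zero_of_two_le (a b : ℂ) {t : ℝ} (ht : 2 ≤ |t|) : G a b t = 0 := by
  simp [G, psi, phi_zero_of_two_le ht]

lemma G_bound : ∃ M : ℝ, 0 ≤ M ∧ ∀ (a b : ℂ) (t : ℝ),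
    ‖G a b t‖ + ‖G1 a b t‖ + ‖G2 a b t‖ ≤ M * (‖a‖ + ‖b‖) := by
  set Q : ℝ → ℝ := fun t => ‖phi t‖ + ‖deriv phi t‖ + ‖deriv (deriv phi) t‖ with hQ
  set S : ℝ → ℝ := (fun t => 1 + |t|) * Q with hS
  have hQeq : Q = (norm ∘ phi) + ((norm ∘ deriv phi) + (norm ∘ deriv (deriv phi))) := by
    ext t; simp [hQ, Function.comp]; ring
  have hcsQ : HasCompactSupport Q := by
    rw [hQeq]
    exact (myB.hasCompactSupport.comp_left (g := norm) norm_zero).add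
      ((myB.hasCompactSupport.deriv.comp_left (g := norm) norm_zero).add
        (myB.hasCompactSupport.deriv.deriv.comp_left (g := norm) norm_zero))
  have hcs : HasCompactSupport S := hcsQ.mul_left
  have hcont : Continuous S := by
    apply (continuous_const.add _root_.continuous_abs).mul
    exact (phi_contDiff.continuous.norm.add dphi_contDiff.continuous.norm).add
      ddphi_contDiff.continuous.norm
  obtain ⟨M0, hM0⟩ := hcs.exists_bound_of_continuous hcont
  refine ⟨3 * max M0 0, by positivity, ?_⟩
  intro a b t
  have hSb : (1 + |t|) * Q t ≤ max M0 0 := by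
    have := hM0 t
    rw [Real.norm_eq_abs] at this
    calc (1 + |t|) * Q t = S t := by simp [hS]
    _ ≤ |S t| := le_abs_self _
    _ ≤ M0 := this
    _ ≤ max M0 0 := le_max_left _ _
  have hA : (0:ℝ) ≤ ‖a‖ := norm_nonneg _
  have hB : (0:ℝ) ≤ ‖b‖ := norm_nonneg _
  have hT : (0:ℝ) ≤ |t| := abs_nonneg _
  have p0 : (0:ℝ) ≤ ‖phi t‖ := norm_nonneg _
  have p1 : (0:ℝ) ≤ ‖deriv phi t‖ := norm_nonneg _
  have p2 : (0:ℝ) ≤ ‖deriv (deriv phi) t‖ := norm_nonneg _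
  have hpsi : ‖psi t‖ = ‖phi t‖ := Complex.norm_real _
  have hpsi1 : ‖psi1 t‖ = ‖deriv phi t‖ := Complex.norm_real _
  have hpsi2 : ‖psi2 t‖ = ‖deriv (deriv phi) t‖ := Complex.norm_real _
  have haff : ‖a + b*(t:ℂ)‖ ≤ ‖a‖ + ‖b‖ * |t| := by
    calc ‖a + b*(t:ℂ)‖ ≤ ‖a‖ + ‖b*(t:ℂ)‖ := norm_add_le _ _
    _ = ‖a‖ + ‖b‖ * |t| := by
        rw [norm_mul, Complex.norm_real, Real.norm_eq_abs]
  have hg0 : ‖G a b t‖ ≤ (‖a‖ + ‖b‖*|t|) * ‖phi t‖ := by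
    rw [G, norm_mul, hpsi]
    exact mul_le_mul_of_nonneg_right haff p0
  have hg1 : ‖G1 a b t‖ ≤ ‖b‖ * ‖phi t‖ + (‖a‖ + ‖b‖*|t|) * ‖deriv phi t‖ := by
    rw [G1]
    refine (norm_add_le _ _).trans (add_le_add ?_ ?_)
    · rw [norm_mul, hpsi]
    · rw [norm_mul, hpsi1]
      exact mul_le_mul_of_nonneg_right haff p1
  have hg2 : ‖G2 a b t‖ ≤ 2*‖b‖ * ‖deriv phi t‖ + (‖a‖ + ‖b‖*|t|) * ‖deriv (deriv phi) t‖ := by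
    rw [G2]
    refine (norm_add_le _ _).trans (add_le_add ?_ ?_)
    · rw [norm_mul, hpsi1, norm_mul]
      simp only [Complex.norm_ofNat]
      exact le_rfl
    · rw [norm_mul, hpsi2]
      exact mul_le_mul_of_nonneg_right haff p2
  have key : ‖G a b t‖ + ‖G1 a b t‖ + ‖G2 a b t‖
      ≤ 3 * (‖a‖ + ‖b‖) * ((1 + |t|) * Q t) := by
    simp only [hQ]
    nlinarith [mul_nonneg hA p0, mul_nonneg hA p1, mul_nonneg hA p2,
      mul_nonneg hB p0, mul_nonneg hB p1, mul_nonneg hB p2,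
      mul_nonneg (mul_nonneg hA hT) p0, mul_nonneg (mul_nonneg hA hT) p1,
      mul_nonneg (mul_nonneg hA hT) p2,
      mul_nonneg (mul_nonneg hB hT) p0, mul_nonneg (mul_nonneg hB hT) p1,
      mul_nonneg (mul_nonneg hB hT) p2]
  calc ‖G a b t‖ + ‖G1 a b t‖ + ‖G2 a b t‖
      ≤ 3 * (‖a‖ + ‖b‖) * ((1 + |t|) * Q t) := key
  _ ≤ 3 * (‖a‖ + ‖b‖) * max M0 0 := by
      apply mul_le_mul_of_nonneg_left hSb (by positivity)
  _ = 3 * max M0 0 * (‖a‖ + ‖b‖) := by ring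


theorem corrector_exists :
    ∃ C : ℝ, 0 < C ∧
      ∀ ε : ℝ, 0 < ε →
      ∀ w : ℝ → ℂ,
        ContDiffOn ℝ 2 w (Iio (-ε)) →
        ContDiffOn ℝ 2 w (Ioo (-ε) ε) →
        ContDiffOn ℝ 2 w (Ioi ε) →
        ∀ wm1 wp1 wm2 wp2 dm1 dp1 dm2 dp2 : ℂ,
        -- one-sided limits of `w` at `-ε` and at `ε`
        Tendsto w (nhdsWithin (-ε) (Iio (-ε))) (nhds wm1) →
        Tendsto w (nhdsWithin (-ε) (Ioi (-ε))) (nhds wp1) →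
        Tendsto w (nhdsWithin ε (Iio ε)) (nhds wm2) →
        Tendsto w (nhdsWithin ε (Ioi ε)) (nhds wp2) →
        -- one-sided limits of `w'` at `-ε` and at `ε`
        Tendsto (deriv w) (nhdsWithin (-ε) (Iio (-ε))) (nhds dm1) →
        Tendsto (deriv w) (nhdsWithin (-ε) (Ioi (-ε))) (nhds dp1) →
        Tendsto (deriv w) (nhdsWithin ε (Iio ε)) (nhds dm2) →
        Tendsto (deriv w) (nhdsWithin ε (Ioi ε)) (nhds dp2) →
        ∃ ρ : ℝ → ℂ,
          HasCompactSupport ρ ∧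
          (∀ x ∈ Ioo (-ε) ε, ρ x = 0) ∧
          ContDiffOn ℝ 2 ρ ({-ε, ε} : Set ℝ)ᶜ ∧
          -- `w + ρ` extends continuously across `-ε` and `ε`
          (∃ L : ℂ, Tendsto (fun x => w x + ρ x) (nhdsWithin (-ε) (Iio (-ε))) (nhds L) ∧
            Tendsto (fun x => w x + ρ x) (nhdsWithin (-ε) (Ioi (-ε))) (nhds L)) ∧
          (∃ L : ℂ, Tendsto (fun x => w x + ρ x) (nhdsWithin ε (Iio ε)) (nhds L) ∧
            Tendsto (fun x => w x + ρ x) (nhdsWithin ε (Ioi ε)) (nhds L)) ∧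
          -- `(w + ρ)'` extends continuously across `-ε` and `ε`
          (∃ L : ℂ, Tendsto (deriv (fun x => w x + ρ x)) (nhdsWithin (-ε) (Iio (-ε))) (nhds L) ∧
            Tendsto (deriv (fun x => w x + ρ x)) (nhdsWithin (-ε) (Ioi (-ε))) (nhds L)) ∧
          (∃ L : ℂ, Tendsto (deriv (fun x => w x + ρ x)) (nhdsWithin ε (Iio ε)) (nhds L) ∧
            Tendsto (deriv (fun x => w x + ρ x)) (nhdsWithin ε (Ioi ε)) (nhds L)) ∧
          -- the uniform bound on `ρ`, `ρ'`, `ρ''`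
          ∀ x : ℝ, ε ≤ |x| → x ≠ -ε → x ≠ ε →
            ‖ρ x‖ + ‖deriv ρ x‖ + ‖deriv (deriv ρ) x‖
              ≤ C * (‖wp1 - wm1‖ + ‖wp2 - wm2‖ + ‖dp1 - dm1‖ + ‖dp2 - dm2‖) := by
  obtain ⟨M, hM0, hM⟩ := G_bound
  refine ⟨M + 1, by linarith, ?_⟩
  intro ε hε w hw1 hw2 hw3 wm1 wp1 wm2 wp2 dm1 dp1 dm2 dp2
    hwm1 hwp1 hwm2 hwp2 hdm1 hdp1 hdm2 hdp2
  have hne : -ε < ε := by linarith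
  set a1 : ℂ := wp1 - wm1 with ha1
  set b1 : ℂ := dp1 - dm1 with hb1
  set a2 : ℂ := wm2 - wp2 with ha2
  set b2 : ℂ := dm2 - dp2 with hb2
  set ρ : ℝ → ℂ := fun x =>
    if ε ≤ x then G a2 b2 (x + -ε) else if x ≤ -ε then G a1 b1 (x + ε) else 0 with hρdef
  -- local descriptions of ρ
  have hmid : ∀ x ∈ Ioo (-ε) ε, ρ x = 0 := by
    intro x hx
    simp only [hρdef]
    rw [if_neg (not_le.2 hx.2), if_neg (not_le.2 hx.1)]
  have hREq : EqOn ρ (fun y => G a2 b2 (y + -ε)) (Ioi ε) := by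
    intro y hy; simp only [hρdef]; rw [if_pos (le_of_lt hy)]
  have hLEq : EqOn ρ (fun y => G a1 b1 (y + ε)) (Iio (-ε)) := by
    intro y hy
    simp only [hρdef]
    rw [if_neg (not_le.2 (lt_trans hy hne)), if_pos (le_of_lt hy)]
  have hRev : ∀ x ∈ Ioi ε, ρ =ᶠ[nhds x] (fun y => G a2 b2 (y + -ε)) :=
    fun x hx => eventuallyEq_of_mem (isOpen_Ioi.mem_nhds hx) hREq
  have hLev : ∀ x ∈ Iio (-ε), ρ =ᶠ[nhds x] (fun y => G a1 b1 (y + ε)) :=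
    fun x hx => eventuallyEq_of_mem (isOpen_Iio.mem_nhds hx) hLEq
  have hMev : ∀ x ∈ Ioo (-ε) ε, ρ =ᶠ[nhds x] (fun _ => (0:ℂ)) :=
    fun x hx => eventuallyEq_of_mem (isOpen_Ioo.mem_nhds hx) hmid
  -- derivatives of ρ on the three regions
  have hdR : ∀ x ∈ Ioi ε, deriv ρ x = G1 a2 b2 (x + -ε) := by
    intro x hx
    rw [(hRev x hx).deriv_eq, (hasDerivAt_G_shift a2 b2 (-ε) x).deriv]
  have hdL : ∀ x ∈ Iio (-ε), deriv ρ x = G1 a1 b1 (x + ε) := by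
    intro x hx
    rw [(hLev x hx).deriv_eq, (hasDerivAt_G_shift a1 b1 ε x).deriv]
  have hdM : ∀ x ∈ Ioo (-ε) ε, deriv ρ x = 0 := by
    intro x hx
    rw [(hMev x hx).deriv_eq, deriv_const]
  have hddR : ∀ x ∈ Ioi ε, deriv (deriv ρ) x = G2 a2 b2 (x + -ε) := by
    intro x hx
    have h : deriv ρ =ᶠ[nhds x] (fun y => G1 a2 b2 (y + -ε)) :=
      eventuallyEq_of_mem (isOpen_Ioi.mem_nhds hx) (fun y hy => hdR y hy)
    rw [h.deriv_eq, (hasDerivAt_G1_shift a2 b2 (-ε) x).deriv]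
  have hddL : ∀ x ∈ Iio (-ε), deriv (deriv ρ) x = G2 a1 b1 (x + ε) := by
    intro x hx
    have h : deriv ρ =ᶠ[nhds x] (fun y => G1 a1 b1 (y + ε)) :=
      eventuallyEq_of_mem (isOpen_Iio.mem_nhds hx) (fun y hy => hdL y hy)
    rw [h.deriv_eq, (hasDerivAt_G1_shift a1 b1 ε x).deriv]
  have hddM : ∀ x ∈ Ioo (-ε) ε, deriv (deriv ρ) x = 0 := by
    intro x hx
    have h : deriv ρ =ᶠ[nhds x] (fun _ => (0:ℂ)) :=
      eventuallyEq_of_mem (isOpen_Ioo.mem_nhds hx) (fun y hy => hdM y hy)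
    rw [h.deriv_eq, deriv_const]
  -- differentiability of ρ
  have hρdiffR : ∀ x ∈ Ioi ε, DifferentiableAt ℝ ρ x := by
    intro x hx
    exact (hasDerivAt_G_shift a2 b2 (-ε) x).differentiableAt.congr_of_eventuallyEq (hRev x hx)
  have hρdiffL : ∀ x ∈ Iio (-ε), DifferentiableAt ℝ ρ x := by
    intro x hx
    exact (hasDerivAt_G_shift a1 b1 ε x).differentiableAt.congr_of_eventuallyEq (hLev x hx)
  have hρdiffM : ∀ x ∈ Ioo (-ε) ε, DifferentiableAt ℝ ρ x := by
    intro x hx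
    exact (differentiableAt_const (0:ℂ)).congr_of_eventuallyEq (hMev x hx)
  -- differentiability of w on the regions
  have hwdiffR : ∀ x ∈ Ioi ε, DifferentiableAt ℝ w x := fun x hx =>
    (hw3.contDiffAt (isOpen_Ioi.mem_nhds hx)).differentiableAt two_ne_zero
  have hwdiffL : ∀ x ∈ Iio (-ε), DifferentiableAt ℝ w x := fun x hx =>
    (hw1.contDiffAt (isOpen_Iio.mem_nhds hx)).differentiableAt two_ne_zero
  have hwdiffM : ∀ x ∈ Ioo (-ε) ε, DifferentiableAt ℝ w x := fun x hx =>
    (hw2.contDiffAt (isOpen_Ioo.mem_nhds hx)).differentiableAt two_ne_zero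
  -- deriv of the sum on the regions
  have hsumR : ∀ x ∈ Ioi ε, deriv (fun y => w y + ρ y) x = deriv w x + deriv ρ x :=
    fun x hx => deriv_add (hwdiffR x hx) (hρdiffR x hx)
  have hsumL : ∀ x ∈ Iio (-ε), deriv (fun y => w y + ρ y) x = deriv w x + deriv ρ x :=
    fun x hx => deriv_add (hwdiffL x hx) (hρdiffL x hx)
  have hsumM : ∀ x ∈ Ioo (-ε) ε, deriv (fun y => w y + ρ y) x = deriv w x + deriv ρ x :=
    fun x hx => deriv_add (hwdiffM x hx) (hρdiffM x hx)
  -- membership facts for the four one-sided filters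
  have hmemR : Ioi ε ∈ nhdsWithin ε (Ioi ε) := self_mem_nhdsWithin
  have hmemL : Iio (-ε) ∈ nhdsWithin (-ε) (Iio (-ε)) := self_mem_nhdsWithin
  have hmemMl : Ioo (-ε) ε ∈ nhdsWithin ε (Iio ε) :=
    Ioo_mem_nhdsLT_of_mem ⟨hne, le_refl ε⟩
  have hmemMr : Ioo (-ε) ε ∈ nhdsWithin (-ε) (Ioi (-ε)) :=
    Ioo_mem_nhdsGT_of_mem ⟨le_refl (-ε), hne⟩
  -- limits of ρ
  have hGcontR : Tendsto (fun y => G a2 b2 (y + -ε)) (nhds ε) (nhds a2) := by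
    have h := ((contDiff_G_shift a2 b2 (-ε)).continuous.tendsto ε)
    simpa [G_zero] using h
  have hGcontL : Tendsto (fun y => G a1 b1 (y + ε)) (nhds (-ε)) (nhds a1) := by
    have h := ((contDiff_G_shift a1 b1 ε).continuous.tendsto (-ε))
    simpa [G_zero] using h
  have hρR : Tendsto ρ (nhdsWithin ε (Ioi ε)) (nhds a2) :=
    (hGcontR.mono_left nhdsWithin_le_nhds).congr'
      (eventuallyEq_of_mem hmemR hREq).symm
  have hρL : Tendsto ρ (nhdsWithin (-ε) (Iio (-ε))) (nhds a1) :=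
    (hGcontL.mono_left nhdsWithin_le_nhds).congr'
      (eventuallyEq_of_mem hmemL hLEq).symm
  have hρMl : Tendsto ρ (nhdsWithin ε (Iio ε)) (nhds 0) :=
    (tendsto_const_nhds).congr' (eventuallyEq_of_mem hmemMl hmid).symm
  have hρMr : Tendsto ρ (nhdsWithin (-ε) (Ioi (-ε))) (nhds 0) :=
    (tendsto_const_nhds).congr' (eventuallyEq_of_mem hmemMr hmid).symm
  -- limits of deriv ρ
  have hG1contR : Tendsto (fun y => G1 a2 b2 (y + -ε)) (nhds ε) (nhds b2) := by
    have hc : Continuous (fun y : ℝ => G1 a2 b2 (y + -ε)) :=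
      (continuous_G1 a2 b2).comp (continuous_id.add continuous_const)
    have h := hc.tendsto ε
    simpa [G1_zero] using h
  have hG1contL : Tendsto (fun y => G1 a1 b1 (y + ε)) (nhds (-ε)) (nhds b1) := by
    have hc : Continuous (fun y : ℝ => G1 a1 b1 (y + ε)) :=
      (continuous_G1 a1 b1).comp (continuous_id.add continuous_const)
    have h := hc.tendsto (-ε)
    simpa [G1_zero] using h
  have hdρR : Tendsto (deriv ρ) (nhdsWithin ε (Ioi ε)) (nhds b2) :=
    (hG1contR.mono_left nhdsWithin_le_nhds).congr'
      (eventuallyEq_of_mem hmemR (fun y hy => hdR y hy)).symm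
  have hdρL : Tendsto (deriv ρ) (nhdsWithin (-ε) (Iio (-ε))) (nhds b1) :=
    (hG1contL.mono_left nhdsWithin_le_nhds).congr'
      (eventuallyEq_of_mem hmemL (fun y hy => hdL y hy)).symm
  have hdρMl : Tendsto (deriv ρ) (nhdsWithin ε (Iio ε)) (nhds 0) :=
    (tendsto_const_nhds).congr' (eventuallyEq_of_mem hmemMl (fun y hy => hdM y hy)).symm
  have hdρMr : Tendsto (deriv ρ) (nhdsWithin (-ε) (Ioi (-ε))) (nhds 0) :=
    (tendsto_const_nhds).congr' (eventuallyEq_of_mem hmemMr (fun y hy => hdM y hy)).symm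
  refine ⟨ρ, ?_, hmid, ?_, ?_, ?_, ?_, ?_, ?_⟩
  -- compact support
  · apply HasCompactSupport.intro (isCompact_Icc (a := -(ε+2)) (b := ε+2))
    intro x hx
    simp only [mem_Icc, not_and_or, not_le] at hx
    simp only [hρdef]
    rcases hx with hx | hx
    · rw [if_neg (by linarith), if_pos (by linarith)]
      refine G_zero_of_two_le _ _ ?_
      rw [_root_.abs_of_nonpos (by linarith : x + ε ≤ 0)]; linarith
    · rw [if_pos (by linarith)]
      refine G_zero_of_two_le _ _ ?_
      rw [_root_.abs_of_nonneg (by linarith : (0:ℝ) ≤ x + -ε)]; linarith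
  -- smoothness away from ±ε
  · intro x hx
    simp only [mem_compl_iff, mem_insert_iff, mem_singleton_iff, not_or] at hx
    obtain ⟨hx1, hx2⟩ := hx
    rcases lt_trichotomy x (-ε) with h | h | h
    · exact (((contDiff_G_shift a1 b1 ε).contDiffAt).congr_of_eventuallyEq
        (hLev x h)).contDiffWithinAt
    · exact absurd h hx1
    · rcases lt_trichotomy x ε with h' | h' | h'
      · exact ((contDiffAt_const (c := (0:ℂ))).congr_of_eventuallyEq
          (hMev x ⟨h, h'⟩)).contDiffWithinAt
      · exact absurd h' hx2
      · exact (((contDiff_G_shift a2 b2 (-ε)).contDiffAt).congr_of_eventuallyEq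
          (hRev x h')).contDiffWithinAt
  -- continuity of w + ρ across -ε
  · refine ⟨wp1, ?_, ?_⟩
    · have h := hwm1.add hρL
      have : wm1 + a1 = wp1 := by rw [ha1]; ring
      rwa [this] at h
    · have h := hwp1.add hρMr
      simpa using h
  -- continuity of w + ρ across ε
  · refine ⟨wm2, ?_, ?_⟩
    · have h := hwm2.add hρMl
      simpa using h
    · have h := hwp2.add hρR
      have : wp2 + a2 = wm2 := by rw [ha2]; ring
      rwa [this] at h
  -- continuity of (w+ρ)' across -ε
  · refine ⟨dp1, ?_, ?_⟩
    · have h := (hdm1.add hdρL).congr'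
        (eventuallyEq_of_mem hmemL (fun y hy => (hsumL y hy).symm))
      have : dm1 + b1 = dp1 := by rw [hb1]; ring
      rwa [this] at h
    · have h := (hdp1.add hdρMr).congr'
        (eventuallyEq_of_mem hmemMr (fun y hy => (hsumM y hy).symm))
      simpa using h
  -- continuity of (w+ρ)' across ε
  · refine ⟨dm2, ?_, ?_⟩
    · have h := (hdm2.add hdρMl).congr'
        (eventuallyEq_of_mem hmemMl (fun y hy => (hsumM y hy).symm))
      simpa using h
    · have h := (hdp2.add hdρR).congr'
        (eventuallyEq_of_mem hmemR (fun y hy => (hsumR y hy).symm))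
      have : dp2 + b2 = dm2 := by rw [hb2]; ring
      rwa [this] at h
  -- the bound
  · intro x hx hx1 hx2
    have n1 : (0:ℝ) ≤ ‖wp1 - wm1‖ := norm_nonneg _
    have n2 : (0:ℝ) ≤ ‖wp2 - wm2‖ := norm_nonneg _
    have n3 : (0:ℝ) ≤ ‖dp1 - dm1‖ := norm_nonneg _
    have n4 : (0:ℝ) ≤ ‖dp2 - dm2‖ := norm_nonneg _
    have hcase : x < -ε ∨ ε < x := by
      rcases le_abs.1 hx with h | h
      · right; exact lt_of_le_of_ne h (Ne.symm hx2)
      · left; have : x ≤ -ε := by linarith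
        exact lt_of_le_of_ne this hx1
    rcases hcase with h | h
    · rw [hLEq h, hdL x h, hddL x h]
      have hb := hM a1 b1 (x + ε)
      have ha1n : ‖a1‖ = ‖wp1 - wm1‖ := rfl
      have hb1n : ‖b1‖ = ‖dp1 - dm1‖ := rfl
      rw [ha1n, hb1n] at hb
      calc ‖G a1 b1 (x + ε)‖ + ‖G1 a1 b1 (x + ε)‖ + ‖G2 a1 b1 (x + ε)‖
          ≤ M * (‖wp1 - wm1‖ + ‖dp1 - dm1‖) := hb
      _ ≤ (M + 1) * (‖wp1 - wm1‖ + ‖wp2 - wm2‖ + ‖dp1 - dm1‖ + ‖dp2 - dm2‖) := by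
          nlinarith
    · rw [hREq h, hdR x h, hddR x h]
      have hb := hM a2 b2 (x + -ε)
      have ha2n : ‖a2‖ = ‖wp2 - wm2‖ := by rw [ha2, norm_sub_rev]
      have hb2n : ‖b2‖ = ‖dp2 - dm2‖ := by rw [hb2, norm_sub_rev]
      rw [ha2n, hb2n] at hb
      calc ‖G a2 b2 (x + -ε)‖ + ‖G1 a2 b2 (x + -ε)‖ + ‖G2 a2 b2 (x + -ε)‖
          ≤ M * (‖wp2 - wm2‖ + ‖dp2 - dm2‖) := hb
      _ ≤ (M + 1) * (‖wp1 - wm1‖ + ‖wp2 - wm2‖ + ‖dp1 - dm1‖ + ‖dp2 - dm2‖) := by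
          nlinarith
end
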